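/- arXiv:1404.2425 — 6 statements merged into one kernel-verified Lean document; each statement's English description precedes it below -/
import Mathlib

section
/- In the weighted-tree setup, let λ and κ be positive constants satisfying d·κ^λ·E[(1−Υ)^λ] < 1. Then almost surely there exists N such that for all n ≥ N, max_{C ∈ 𝒢_{n,r}} M(C) ≤ κ^{−n}. -/
/-!
If a set `C` of vertices `n` levels below `w` lies in an `r`-ary tree, at most `r` children of `w`
lead to `C`, and their weights sum to at most `1 - Υ_w`. Induction on `n` then bounds `M(C)^λ` by
`M(w)^λ Φ_n(w)`, where `Φ_0 = 1` and `Φ_{n+1}(w) = (1 - Υ_w)^λ ∑_i Φ_n(wi)` no longer depends on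
`C`. Since `Υ_w` is independent of the weights strictly below `w`, `E Φ_n = (d E(1-Υ)^λ)^n`, so
Markov's inequality gives `P(Φ_n(root) ≥ κ^{-nλ}) ≤ (d κ^λ E(1-Υ)^λ)^n`, a summable sequence, and
Borel–Cantelli concludes.
-/

open MeasureTheory ProbabilityTheory

/-- Vertices of the infinite rooted `d`-ary tree: finite sequences over `{1,…,d}`.
The root is the empty list; the offspring of `v` are `i :: v` for `i : Fin d`. -/
abbrev Vtx (d : ℕ) := List (Fin d)

/-- `J` is (the vertex set of) a subtree of the infinite `d`-ary tree, i.e. a nonempty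
set of vertices which is connected in the tree: it has a minimal vertex `m` (an ancestor
of all its vertices) and contains, for each of its vertices `v`, all vertices on the
path from `m` to `v`.  (Here `u <:+ v`, i.e. `u` is a suffix of `v`, means that `u` is an
ancestor of `v` or `v` itself.) -/
def IsSubtreeSet {d : ℕ} (J : Finset (Vtx d)) : Prop :=
  ∃ m ∈ J, ∀ v ∈ J, m <:+ v ∧ ∀ u : Vtx d, m <:+ u → u <:+ v → u ∈ J

/-- Every vertex of `J` has at most `r` offspring in `J`. -/
def IsRarySet {d : ℕ} (r : ℕ) (J : Finset (Vtx d)) : Prop :=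
  ∀ v ∈ J, (Finset.univ.filter fun i : Fin d => (i :: v) ∈ J).card ≤ r

/-- The minimum of the sums `b i₁ + ⋯ + b iₖ` over all `k`-element subsets
`{i₁ < ⋯ < iₖ}` of `{1, …, d}`. -/
noncomputable def minSum (d k : ℕ) (b : Fin d → ℝ) : ℝ :=
  sInf {x | ∃ S : Finset (Fin d), S.card = k ∧ x = ∑ i ∈ S, b i}

/-- `C` belongs to `𝒢_{n,r}`: a set of at most `r^n` vertices at distance `n` from the
root that are contained in a common `r`-ary subtree of the infinite `d`-ary tree. -/
def MemG (d r n : ℕ) (C : Finset (Vtx d)) : Prop :=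
  C.card ≤ r ^ n ∧ (∀ v ∈ C, v.length = n) ∧
    ∃ J : Finset (Vtx d), IsSubtreeSet J ∧ IsRarySet r J ∧ C ⊆ J

open Filter Finset

section minSum

variable {d k : ℕ}

lemma minSum_eq_iInf (b : Fin d → ℝ) :
    minSum d k b = ⨅ S : {S : Finset (Fin d) // S.card = k}, ∑ i ∈ S.1, b i := by
  rw [minSum, iInf]
  congr 1
  ext x
  simp [eq_comm]

lemma minSum_le {b : Fin d → ℝ} {S : Finset (Fin d)} (hS : S.card = k) :
    minSum d k b ≤ ∑ i ∈ S, b i := by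
  rw [minSum_eq_iInf]
  exact ciInf_le (Set.finite_range _).bddBelow (⟨S, hS⟩ : {S : Finset (Fin d) // S.card = k})

lemma minSum_nonneg {b : Fin d → ℝ} (hb : ∀ i, 0 ≤ b i) : 0 ≤ minSum d k b := by
  rw [minSum_eq_iInf]
  exact Real.iInf_nonneg fun S => sum_nonneg fun i _ => hb i

lemma measurable_minSum : Measurable (minSum d k) := by
  simp_rw [funext minSum_eq_iInf]
  exact Measurable.iInf fun S => measurable_sum _ fun i _ => measurable_pi_apply i

lemma sum_le_one_sub_minSum {r : ℕ} {b : Fin d → ℝ} (hb : b ∈ stdSimplex ℝ (Fin d))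
    {s : Finset (Fin d)} (hs : s.card ≤ r) : ∑ i ∈ s, b i ≤ 1 - minSum d (d - r) b := by
  obtain ⟨T, hTs, hT⟩ := Finset.exists_subset_card_eq (s := sᶜ) (n := d - r)
    (by rw [card_compl, Fintype.card_fin]; omega)
  have hTle : ∑ i ∈ T, b i ≤ ∑ i ∈ sᶜ, b i := sum_le_sum_of_subset_of_nonneg hTs fun i _ _ => hb.1 i
  have hsum : ∑ i ∈ s, b i + ∑ i ∈ sᶜ, b i = 1 := by rw [sum_add_sum_compl]; exact hb.2
  linarith [minSum_le (b := b) hT]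

lemma one_sub_minSum_nonneg {r : ℕ} {b : Fin d → ℝ} (hb : b ∈ stdSimplex ℝ (Fin d)) :
    0 ≤ 1 - minSum d (d - r) b := by
  simpa using sum_le_one_sub_minSum (r := r) hb (s := ∅) (Nat.zero_le r)

lemma one_sub_minSum_le_one {b : Fin d → ℝ} (hb : ∀ i, 0 ≤ b i) : 1 - minSum d k b ≤ 1 :=
  sub_le_self 1 (minSum_nonneg hb)

end minSum

lemma List.eq_of_cons_suffix_of_cons_suffix {α : Type*} {a b : α} {l l' : List α}
    (ha : (a :: l) <:+ l') (hb : (b :: l) <:+ l') : a = b := by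
  simpa using (List.suffix_of_suffix_length_le ha hb le_rfl).eq_of_length rfl

lemma List.exists_cons_suffix_of_suffix {α : Type*} {l l' : List α} (h : l <:+ l')
    (hlt : l.length < l'.length) : ∃ a, (a :: l) <:+ l' := by
  obtain ⟨u, rfl⟩ := h
  rcases List.eq_nil_or_concat' u with rfl | ⟨u', a, rfl⟩
  · simp at hlt
  · exact ⟨a, u', by simp⟩

lemma Real.rpow_sum_le_rpow_sum_mul_sum {ι : Type*} (s : Finset ι) {p : ℝ} (hp : 0 < p)
    {f a b : ι → ℝ} (hf : ∀ i ∈ s, 0 ≤ f i) (ha : ∀ i ∈ s, 0 ≤ a i) (hb : ∀ i ∈ s, 0 ≤ b i)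
    (h : ∀ i ∈ s, f i ^ p ≤ a i ^ p * b i) :
    (∑ i ∈ s, f i) ^ p ≤ (∑ i ∈ s, a i) ^ p * ∑ i ∈ s, b i := by
  set B := ∑ i ∈ s, b i
  have hB : 0 ≤ B := sum_nonneg hb
  have hB' : 0 ≤ B ^ p⁻¹ := Real.rpow_nonneg hB _
  have hfa : ∀ i ∈ s, f i ≤ a i * B ^ p⁻¹ := fun i hi => by
    rw [← Real.rpow_le_rpow_iff (hf i hi) (mul_nonneg (ha i hi) hB') hp,
      Real.mul_rpow (ha i hi) hB', Real.rpow_inv_rpow hB hp.ne']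
    exact (h i hi).trans <| mul_le_mul_of_nonneg_left (single_le_sum hb hi)
      (Real.rpow_nonneg (ha i hi) p)
  calc (∑ i ∈ s, f i) ^ p ≤ ((∑ i ∈ s, a i) * B ^ p⁻¹) ^ p := by
        rw [sum_mul]
        exact Real.rpow_le_rpow (sum_nonneg hf) (sum_le_sum hfa) hp.le
    _ = (∑ i ∈ s, a i) ^ p * B := by
        rw [Real.mul_rpow (sum_nonneg ha) hB', Real.rpow_inv_rpow hB hp.ne']

section Tree

variable {d r : ℕ}

def mass (x : Vtx d → ℝ) (ν : Vtx d) : ℝ := (ν.tails.map x).prod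

lemma mass_nil (x : Vtx d → ℝ) : mass x [] = x [] := by
  simp [mass, List.tails]

lemma mass_cons (x : Vtx d → ℝ) (i : Fin d) (v : Vtx d) :
    mass x (i :: v) = x (i :: v) * mass x v := by
  simp [mass]

lemma mass_nonneg {x : Vtx d → ℝ} (hx : ∀ σ, 0 ≤ x σ) (ν : Vtx d) : 0 ≤ mass x ν :=
  List.prod_nonneg fun _ h => by obtain ⟨σ, -, rfl⟩ := List.mem_map.1 h; exact hx σ

lemma sum_eq_sum_children {β : Type*} [AddCommMonoid β] (f : Vtx d → β) {w : Vtx d}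
    {C : Finset (Vtx d)} (hC : ∀ ν ∈ C, w <:+ ν ∧ w.length < ν.length) :
    ∑ ν ∈ C, f ν = ∑ i ∈ univ.filter (fun i => ∃ ν ∈ C, (i :: w) <:+ ν),
      ∑ ν ∈ C.filter ((i :: w) <:+ ·), f ν := by
  rw [← sum_biUnion (t := fun i => C.filter ((i :: w) <:+ ·)) fun i _ j _ hij =>
    disjoint_left.2 fun ν hi hj =>
      hij (List.eq_of_cons_suffix_of_cons_suffix (mem_filter.1 hi).2 (mem_filter.1 hj).2)]
  congr 1
  ext ν
  simp only [mem_biUnion, mem_filter, mem_univ, true_and]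
  refine ⟨fun hν => ?_, fun ⟨_, _, hν, _⟩ => hν⟩
  obtain ⟨i, hi⟩ := List.exists_cons_suffix_of_suffix (hC ν hν).1 (hC ν hν).2
  exact ⟨i, ⟨ν, hν, hi⟩, hν, hi⟩

def HasRaryAncestors (r : ℕ) (C : Finset (Vtx d)) : Prop :=
  ∀ (v : Vtx d) (s : Finset (Fin d)), (∀ i ∈ s, ∃ ν ∈ C, (i :: v) <:+ ν) → s.card ≤ r

lemma HasRaryAncestors.mono {C C' : Finset (Vtx d)} (h : HasRaryAncestors r C) (hC : C' ⊆ C) :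
    HasRaryAncestors r C' :=
  fun v s hs => h v s fun i hi => (hs i hi).imp fun _ hν => ⟨hC hν.1, hν.2⟩

lemma MemG.hasRaryAncestors {n : ℕ} {C : Finset (Vtx d)} (hr : 0 < r) (hC : MemG d r n C) :
    HasRaryAncestors r C := by
  obtain ⟨-, -, J, ⟨m, -, hJ⟩, hJr, hCJ⟩ := hC
  intro v s hs
  by_cases hv : v ∈ J
  · -- every child of `v` leading to `C` lies between `m` and a vertex of `J`, hence in `J`
    refine (card_le_card fun i hi => ?_).trans (hJr v hv)
    obtain ⟨ν, hνC, hiν⟩ := hs i hi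
    have hm : m <:+ i :: v := ((hJ v hv).1).trans (List.suffix_cons i v)
    simpa using (hJ ν (hCJ hνC)).2 _ hm hiν
  · -- otherwise `v` lies strictly above `m`, and the only child of `v` towards `m` is on its path
    have hbelow : ∀ i ∈ s, (i :: v) <:+ m := fun i hi => by
      obtain ⟨ν, hνC, hiν⟩ := hs i hi
      have hmν := (hJ ν (hCJ hνC)).1
      rcases List.suffix_or_suffix_of_suffix hiν hmν with hiv | hm
      · exact hiv
      rcases List.suffix_cons_iff.1 hm with rfl | hmv
      · exact List.suffix_refl _
      · exact absurd ((hJ ν (hCJ hνC)).2 v hmv ((List.suffix_cons i v).trans hiν)) hv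
    exact (card_le_one.2 fun i hi j hj =>
      List.eq_of_cons_suffix_of_cons_suffix (hbelow i hi) (hbelow j hj)).trans hr

end Tree

/-- `massBound r p y n w` is the `Φ_n(w)` of the proof idea, with `y w i` the weight of `i :: w`. -/
noncomputable def massBound {d : ℕ} (r : ℕ) (p : ℝ) (y : Vtx d → Fin d → ℝ) : ℕ → Vtx d → ℝ
  | 0, _ => 1
  | n + 1, w => (1 - minSum d (d - r) (y w)) ^ p * ∑ i, massBound r p y n (i :: w)

section massBound

variable {d r : ℕ} {p : ℝ} {y : Vtx d → Fin d → ℝ}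

lemma massBound_nonneg (hy : ∀ w, y w ∈ stdSimplex ℝ (Fin d)) (n : ℕ) (w : Vtx d) :
    0 ≤ massBound r p y n w := by
  induction n generalizing w with
  | zero => exact zero_le_one
  | succ n ih =>
    exact mul_nonneg (Real.rpow_nonneg (one_sub_minSum_nonneg (hy w)) p)
      (sum_nonneg fun i _ => ih _)

lemma massBound_le_pow (hp : 0 ≤ p) (hy : ∀ w, y w ∈ stdSimplex ℝ (Fin d)) (n : ℕ) (w : Vtx d) :
    massBound r p y n w ≤ (d : ℝ) ^ n := by
  induction n generalizing w with
  | zero => simp [massBound]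
  | succ n ih =>
    calc massBound r p y (n + 1) w ≤ 1 * ∑ _i : Fin d, (d : ℝ) ^ n :=
          mul_le_mul (Real.rpow_le_one (one_sub_minSum_nonneg (hy w))
              (one_sub_minSum_le_one (hy w).1) hp)
            (sum_le_sum fun i _ => ih _) (sum_nonneg fun i _ => massBound_nonneg hy n _) zero_le_one
      _ = (d : ℝ) ^ (n + 1) := by simp [pow_succ, mul_comm]

lemma sum_mass_children_le {x : Vtx d → ℝ} (hx0 : ∀ σ, 0 ≤ x σ)
    (hx1 : (fun i => x (i :: w)) ∈ stdSimplex ℝ (Fin d)) {s : Finset (Fin d)} (hs : s.card ≤ r) :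
    ∑ i ∈ s, mass x (i :: w) ≤ mass x w * (1 - minSum d (d - r) fun i => x (i :: w)) := by
  simp_rw [mass_cons, mul_comm (x _), ← mul_sum]
  exact mul_le_mul_of_nonneg_left (sum_le_one_sub_minSum hx1 hs) (mass_nonneg hx0 w)

theorem rpow_sum_mass_le_mul_massBound {x : Vtx d → ℝ} (hp : 0 < p) (hx0 : ∀ σ, 0 ≤ x σ)
    (hx1 : ∀ w, ∑ i, x (i :: w) = 1) (n : ℕ) (w : Vtx d) (C : Finset (Vtx d))
    (hC : HasRaryAncestors r C) (hCw : ∀ ν ∈ C, w <:+ ν ∧ ν.length = n + w.length) :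
    (∑ ν ∈ C, mass x ν) ^ p ≤ mass x w ^ p * massBound r p (fun w i => x (i :: w)) n w := by
  set y : Vtx d → Fin d → ℝ := fun w i => x (i :: w)
  have hy : ∀ w, y w ∈ stdSimplex ℝ (Fin d) := fun w => ⟨fun i => hx0 _, hx1 w⟩
  have hM : ∀ ν, 0 ≤ mass x ν := mass_nonneg hx0
  induction n generalizing w C with
  | zero =>
    have hsub : C ⊆ {w} := fun ν hν => by
      obtain ⟨hwν, hlen⟩ := hCw ν hν
      exact mem_singleton.2 (hwν.eq_of_length (by simpa using hlen.symm)).symm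
    rcases subset_singleton_iff.1 hsub with rfl | rfl
    · simpa [massBound, Real.zero_rpow hp.ne'] using Real.rpow_nonneg (hM w) p
    · simp [massBound]
  | succ n ih =>
    set s := univ.filter fun i => ∃ ν ∈ C, (i :: w) <:+ ν
    have hs : s.card ≤ r := hC w s fun i hi => (mem_filter.1 hi).2
    have hchild : ∀ i ∈ s, (∑ ν ∈ C.filter ((i :: w) <:+ ·), mass x ν) ^ p ≤
        mass x (i :: w) ^ p * massBound r p y n (i :: w) :=
      fun i _ => ih (i :: w) _ (hC.mono (filter_subset _ _)) fun ν hν => by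
        obtain ⟨hνC, hiν⟩ := mem_filter.1 hν
        exact ⟨hiν, by simp only [List.length_cons]; linarith [(hCw ν hνC).2]⟩
    have hΦ : ∀ i, 0 ≤ massBound r p y n (i :: w) := fun i => massBound_nonneg hy n _
    calc (∑ ν ∈ C, mass x ν) ^ p
        = (∑ i ∈ s, ∑ ν ∈ C.filter ((i :: w) <:+ ·), mass x ν) ^ p := by
          rw [sum_eq_sum_children (mass x) fun ν hν => ⟨(hCw ν hν).1, by linarith [(hCw ν hν).2]⟩]
      _ ≤ (∑ i ∈ s, mass x (i :: w)) ^ p * ∑ i ∈ s, massBound r p y n (i :: w) :=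
          Real.rpow_sum_le_rpow_sum_mul_sum s hp (fun i _ => sum_nonneg fun ν _ => hM ν)
            (fun i _ => hM _) (fun i _ => hΦ i) hchild
      _ ≤ (mass x w * (1 - minSum d (d - r) (y w))) ^ p * ∑ i, massBound r p y n (i :: w) :=
          mul_le_mul (Real.rpow_le_rpow (sum_nonneg fun i _ => hM _)
              (sum_mass_children_le hx0 (hy w) hs) hp.le)
            (sum_le_sum_of_subset_of_nonneg (subset_univ s) fun i _ _ => hΦ i)
            (sum_nonneg fun i _ => hΦ i)
            (Real.rpow_nonneg (mul_nonneg (hM w) (one_sub_minSum_nonneg (hy w))) p)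
      _ = mass x w ^ p * massBound r p y (n + 1) w := by
          rw [Real.mul_rpow (hM w) (one_sub_minSum_nonneg (hy w)), massBound, mul_assoc]

end massBound

section Probability

variable {Ω : Type*} {d r : ℕ} {p : ℝ} (F : Vtx d → Ω → Fin d → ℝ)

lemma measurable_massBound_descendants (n : ℕ) (w : Vtx d) :
    Measurable[⨆ σ ∈ {σ : Vtx d | w <:+ σ}, MeasurableSpace.comap (F σ) inferInstance]
      fun ω => massBound r p (fun σ => F σ ω) n w := by
  induction n generalizing w with
  | zero => exact measurable_const
  | succ n ih =>
    refine (((measurable_const.sub measurable_minSum).pow_const p).comp ?_).mul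
      (measurable_sum _ fun i _ => (ih (i :: w)).mono
        (biSup_mono fun σ hσ => (List.suffix_cons i w).trans hσ) le_rfl)
    exact (comap_measurable (F w)).mono (le_iSup₂ (f := fun σ (_ : w <:+ σ) =>
      MeasurableSpace.comap (F σ) inferInstance) w (List.suffix_refl w)) le_rfl

variable [MeasurableSpace Ω] {μ : Measure Ω} {F}

lemma measurable_massBound (hF : ∀ σ, Measurable (F σ)) (n : ℕ) (w : Vtx d) :
    Measurable fun ω => massBound r p (fun σ => F σ ω) n w :=
  (measurable_massBound_descendants F n w).mono (iSup₂_le fun σ _ => (hF σ).comap_le) le_rfl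

lemma integrable_massBound [IsFiniteMeasure μ] (hF : ∀ σ, Measurable (F σ)) (hp : 0 ≤ p)
    (hsimplex : ∀ᵐ ω ∂μ, ∀ σ, F σ ω ∈ stdSimplex ℝ (Fin d)) (n : ℕ) (w : Vtx d) :
    Integrable (fun ω => massBound r p (fun σ => F σ ω) n w) μ :=
  .of_bound (measurable_massBound hF n w).aestronglyMeasurable ((d : ℝ) ^ n) <|
    hsimplex.mono fun ω hω => by
      rw [Real.norm_of_nonneg (massBound_nonneg hω n w)]
      exact massBound_le_pow hp hω n w

lemma indepFun_weight_massBound_children (hF : ∀ σ, Measurable (F σ)) (hind : iIndepFun F μ)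
    {g : (Fin d → ℝ) → ℝ} (hg : Measurable g) (n : ℕ) (w : Vtx d) :
    IndepFun (fun ω => g (F w ω)) (fun ω => ∑ i, massBound r p (fun σ => F σ ω) n (i :: w)) μ := by
  rw [IndepFun_iff_Indep]
  have hdisj : Disjoint {w} {σ : Vtx d | ∃ i : Fin d, (i :: w) <:+ σ} :=
    Set.disjoint_singleton_left.2 fun ⟨i, hi⟩ => by simpa using hi.length_le
  refine indep_of_indep_of_le (indep_iSup_of_disjoint (fun σ => (hF σ).comap_le)
    ((iIndepFun_iff_iIndep _ _ _).1 hind) hdisj) ?_ ?_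
  · exact ((hg.comp (comap_measurable (F w))).comap_le).trans
      (le_iSup₂ (f := fun σ (_ : σ ∈ ({w} : Set (Vtx d))) =>
        MeasurableSpace.comap (F σ) inferInstance) w rfl)
  · exact (measurable_sum _ fun i _ => (measurable_massBound_descendants F n (i :: w)).mono
      (biSup_mono fun σ hσ => ⟨i, hσ⟩) le_rfl).comap_le

theorem integral_massBound [IsProbabilityMeasure μ] (hF : ∀ σ, Measurable (F σ))
    (hind : iIndepFun F μ) (hident : ∀ σ, μ.map (F σ) = μ.map (F [])) (hp : 0 ≤ p)
    (hsimplex : ∀ᵐ ω ∂μ, ∀ σ, F σ ω ∈ stdSimplex ℝ (Fin d)) (n : ℕ) (w : Vtx d) :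
    ∫ ω, massBound r p (fun σ => F σ ω) n w ∂μ =
      ((d : ℝ) * ∫ ω, (1 - minSum d (d - r) (F [] ω)) ^ p ∂μ) ^ n := by
  induction n generalizing w with
  | zero => simp [massBound]
  | succ n ih =>
    have hg : Measurable fun b : Fin d → ℝ => (1 - minSum d (d - r) b) ^ p :=
      (measurable_const.sub measurable_minSum).pow_const p
    have hweight : ∫ ω, (1 - minSum d (d - r) (F w ω)) ^ p ∂μ =
        ∫ ω, (1 - minSum d (d - r) (F [] ω)) ^ p ∂μ := by
      rw [← integral_map (hF w).aemeasurable hg.aestronglyMeasurable, hident w,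
        integral_map (hF []).aemeasurable hg.aestronglyMeasurable]
    have hchildren : ∫ ω, ∑ i, massBound r p (fun σ => F σ ω) n (i :: w) ∂μ =
        d * ((d : ℝ) * ∫ ω, (1 - minSum d (d - r) (F [] ω)) ^ p ∂μ) ^ n := by
      rw [integral_finsetSum _ fun i _ => integrable_massBound hF hp hsimplex n _]
      simp [ih]
    calc ∫ ω, massBound r p (fun σ => F σ ω) (n + 1) w ∂μ
        = (∫ ω, (1 - minSum d (d - r) (F w ω)) ^ p ∂μ) *
            ∫ ω, ∑ i, massBound r p (fun σ => F σ ω) n (i :: w) ∂μ :=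
          (indepFun_weight_massBound_children hF hind hg n w).integral_mul_eq_mul_integral
            (hg.comp (hF w)).aestronglyMeasurable
            (measurable_sum _ fun i _ => measurable_massBound hF n _).aestronglyMeasurable
      _ = _ := by rw [hweight, hchildren]; ring

theorem ae_eventually_lt_of_summable_integral_div [IsFiniteMeasure μ] {f : ℕ → Ω → ℝ}
    {t : ℕ → ℝ} (hf0 : ∀ n, 0 ≤ᵐ[μ] f n) (hfi : ∀ n, Integrable (f n) μ) (ht : ∀ n, 0 < t n)
    (hs : Summable fun n => (∫ ω, f n ω ∂μ) / t n) :
    ∀ᵐ ω ∂μ, ∀ᶠ n in atTop, f n ω < t n := by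
  have hmarkov : ∀ n, μ {ω | t n ≤ f n ω} ≤ ENNReal.ofReal ((∫ ω, f n ω ∂μ) / t n) := fun n => by
    rw [← ofReal_measureReal]
    refine ENNReal.ofReal_le_ofReal ?_
    rw [le_div_iff₀ (ht n), mul_comm]
    exact mul_meas_ge_le_integral_of_nonneg (hf0 n) (hfi n) (t n)
  filter_upwards [ae_eventually_notMem (ne_top_of_le_ne_top hs.tsum_ofReal_ne_top
    (ENNReal.tsum_le_tsum hmarkov))] with ω hω
  exact hω.mono fun n hn => not_le.1 hn

end Probability

lemma Real.zpow_neg_natCast_rpow {κ : ℝ} (hκ : 0 < κ) (n : ℕ) (p : ℝ) :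
    (κ ^ (-(n : ℤ))) ^ p = ((κ ^ p) ^ n)⁻¹ := by
  rw [zpow_neg, zpow_natCast, Real.inv_rpow (by positivity), ← Real.rpow_natCast,
    ← Real.rpow_natCast, ← Real.rpow_mul hκ.le, ← Real.rpow_mul hκ.le, mul_comm]

theorem statement7_general (d r : ℕ) (hr : 0 < r)
    {Ω : Type*} [MeasurableSpace Ω] (μ : Measure Ω) [IsProbabilityMeasure μ]
    -- the weighted-tree setup
    (X : Vtx d → Ω → ℝ) (hmeas : ∀ ν, Measurable (X ν))
    (hroot : ∀ ω, X [] ω = 1)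
    (hval : ∀ ν ω, X ν ω ∈ Set.Ioc (0 : ℝ) 1)
    (hsum : ∀ ν : Vtx d, ∀ᵐ ω ∂μ, ∑ i : Fin d, X (i :: ν) ω = 1)
    (hindep : ProbabilityTheory.iIndepFun
        (fun ν ω => (fun i : Fin d => X (i :: ν) ω)) μ)
    (hident : ∀ ν ν' : Vtx d,
        Measure.map (fun ω => (fun i : Fin d => X (i :: ν) ω)) μ =
          Measure.map (fun ω => (fun i : Fin d => X (i :: ν') ω)) μ)
    -- `Υ ν = min {X (νi₁) + ⋯ + X (νi_{d-r}) : 1 ≤ i₁ < ⋯ < i_{d-r} ≤ d}`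
    (Υ : Vtx d → Ω → ℝ)
    (hΥ : ∀ ν ω, Υ ν ω = minSum d (d - r) (fun i => X (i :: ν) ω))
    -- the constants κ, λ
    (κ lam : ℝ) (hκ : 0 < κ) (hlam : 0 < lam)
    (hcond : (d : ℝ) * κ ^ lam * ∫ ω, (1 - Υ [] ω) ^ lam ∂μ < 1) :
    -- a.s. eventually, `max_{C ∈ 𝒢_{n,r}} M(C) ≤ κ⁻ⁿ`, where
    -- `M(ν) = ∏_{σ ∈ [root, ν]} X σ` (the product over the ancestors of `ν`, inclusive)
    ∀ᵐ ω ∂μ, ∃ N : ℕ, ∀ n ≥ N, ∀ C : Finset (Vtx d), MemG d r n C →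
      ∑ ν ∈ C, (ν.tails.map fun σ => X σ ω).prod ≤ κ ^ (-(n : ℤ)) := by
  set F : Vtx d → Ω → Fin d → ℝ := fun ν ω i => X (i :: ν) ω
  have hF : ∀ σ, Measurable (F σ) := fun σ => measurable_pi_lambda _ fun i => hmeas (i :: σ)
  have hsimplex : ∀ᵐ ω ∂μ, ∀ σ, F σ ω ∈ stdSimplex ℝ (Fin d) := by
    filter_upwards [ae_all_iff.2 hsum] with ω hω σ using ⟨fun i => (hval _ ω).1.le, hω σ⟩
  set I := ∫ ω, (1 - minSum d (d - r) (F [] ω)) ^ lam ∂μ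
  have hI : (d : ℝ) * κ ^ lam * I < 1 := by simpa only [hΥ] using hcond
  have hI0 : 0 ≤ I := integral_nonneg_of_ae <|
    hsimplex.mono fun ω hω => Real.rpow_nonneg (one_sub_minSum_nonneg (hω [])) lam
  have hsummable : Summable fun n =>
      (∫ ω, massBound r lam (fun σ => F σ ω) n [] ∂μ) / ((κ ^ lam) ^ n)⁻¹ := by
    simp_rw [integral_massBound hF hindep (fun σ => hident σ []) hlam.le hsimplex, div_inv_eq_mul,
      ← mul_pow]
    exact summable_geometric_of_lt_one (by positivity) (by linarith)
  filter_upwards [ae_eventually_lt_of_summable_integral_div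
    (fun n => hsimplex.mono fun ω hω => massBound_nonneg hω n [])
    (integrable_massBound hF hlam.le hsimplex · []) (fun n => by positivity) hsummable,
    ae_all_iff.2 hsum] with ω hω hωsum
  obtain ⟨N, hN⟩ := eventually_atTop.1 hω
  refine ⟨N, fun n hn C hC => ?_⟩
  have hmass := rpow_sum_mass_le_mul_massBound hlam (fun σ => (hval σ ω).1.le) hωsum n [] C
    (hC.hasRaryAncestors hr) fun ν hν => ⟨List.nil_suffix, by simpa using hC.2.1 ν hν⟩
  rw [mass_nil, hroot, Real.one_rpow, one_mul] at hmass
  change ∑ ν ∈ C, mass (fun σ => X σ ω) ν ≤ _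
  rw [← Real.rpow_le_rpow_iff (sum_nonneg fun ν _ => mass_nonneg (fun σ => (hval σ ω).1.le) ν)
    (zpow_pos hκ _).le hlam, Real.zpow_neg_natCast_rpow hκ]
  exact hmass.trans (hN n hn).le

theorem statement7 (d r : ℕ) (hr : 0 < r) (hrd : r < d)
    {Ω : Type*} [MeasurableSpace Ω] (μ : Measure Ω) [IsProbabilityMeasure μ]
    -- the weighted-tree setup
    (X : Vtx d → Ω → ℝ) (hmeas : ∀ ν, Measurable (X ν))
    (hroot : ∀ ω, X [] ω = 1)
    (hval : ∀ ν ω, X ν ω ∈ Set.Ioc (0 : ℝ) 1)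
    (hsum : ∀ ν : Vtx d, ∀ᵐ ω ∂μ, ∑ i : Fin d, X (i :: ν) ω = 1)
    (hindep : ProbabilityTheory.iIndepFun
        (fun ν ω => (fun i : Fin d => X (i :: ν) ω)) μ)
    (hident : ∀ ν ν' : Vtx d,
        Measure.map (fun ω => (fun i : Fin d => X (i :: ν) ω)) μ =
          Measure.map (fun ω => (fun i : Fin d => X (i :: ν') ω)) μ)
    -- `Υ ν = min {X (νi₁) + ⋯ + X (νi_{d-r}) : 1 ≤ i₁ < ⋯ < i_{d-r} ≤ d}`
    (Υ : Vtx d → Ω → ℝ)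
    (hΥ : ∀ ν ω, Υ ν ω = minSum d (d - r) (fun i => X (i :: ν) ω))
    -- the constants κ, λ
    (κ lam : ℝ) (hκ : 0 < κ) (hlam : 0 < lam)
    (hcond : (d : ℝ) * κ ^ lam * ∫ ω, (1 - Υ [] ω) ^ lam ∂μ < 1) :
    -- a.s. eventually, `max_{C ∈ 𝒢_{n,r}} M(C) ≤ κ⁻ⁿ`, where
    -- `M(ν) = ∏_{σ ∈ [root, ν]} X σ` (the product over the ancestors of `ν`, inclusive)
    ∀ᵐ ω ∂μ, ∃ N : ℕ, ∀ n ≥ N, ∀ C : Finset (Vtx d), MemG d r n C →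
      ∑ ν ∈ C, (ν.tails.map fun σ => X σ ω).prod ≤ κ ^ (-(n : ℤ)) :=
  statement7_general d r hr μ X hmeas hroot hval hsum hindep hident Υ hΥ κ lam hκ hlam hcond
end

section
/- In the weighted-tree setup, let λ and κ be positive constants satisfying d·κ^λ·E[(1−Υ)^λ] < 1. Then almost surely there exists N such that for all n ≥ N and every vertex ν with |ν| = n, ∏_{σ∈[r,p(ν)]} (1−Υ_σ)^{−1} ≥ κ^n. -/
open MeasureTheory ProbabilityTheory

/-!
Markov's inequality and a union bound, level by level. Put `Y σ = (1 - Υ σ)^λ` and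
`c = E[(1 - Υ)^λ]`. By independence the product of the `Y σ` along the path from the root to
the parent of a vertex at level `n` has mean `c^n`, so the probability that `κ^(λ n)` times it
reaches `1` for some of the `d^n` vertices at level `n` is at most `(d κ^λ c)^n`. These
probabilities are summable, and Borel–Cantelli gives the claim after taking `λ`-th roots.
-/

section minSum

open Finset

variable {d k : ℕ}

lemma minSum_eq_inf' (hk : k ≤ d) (b : Fin d → ℝ) :
    minSum d k b = (powersetCard k univ).inf' (powersetCard_nonempty.2 (by simpa using hk))
      (fun S => ∑ i ∈ S, b i) := by
  rw [inf'_eq_csInf_image, minSum]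
  congr 1
  ext x
  simp [eq_comm]

lemma continuous_minSum (hk : k ≤ d) : Continuous (minSum d k) := by
  simp_rw [funext (minSum_eq_inf' hk)]
  exact Continuous.finset_inf'_apply _ fun S _ =>
    continuous_finsetSum S fun i _ => continuous_apply i

lemma minSum_pos (hk : 0 < k) (hkd : k ≤ d) {b : Fin d → ℝ} (hb : ∀ i, 0 < b i) :
    0 < minSum d k b := by
  rw [minSum_eq_inf' hkd, lt_inf'_iff]
  intro S hS
  rw [mem_powersetCard_univ] at hS
  exact sum_pos (fun i _ => hb i) (card_pos.1 (hS ▸ hk))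

lemma minSum_lt_sum (hk : k < d) {b : Fin d → ℝ} (hb : ∀ i, 0 < b i) :
    minSum d k b < ∑ i, b i := by
  obtain ⟨S, hS⟩ := powersetCard_nonempty.2 (by simpa using hk.le : k ≤ #(univ : Finset (Fin d)))
  rw [mem_powersetCard_univ] at hS
  obtain ⟨i, -, hi⟩ := exists_mem_notMem_of_card_lt_card (by simpa [hS] using hk : #S < #univ)
  calc minSum d k b ≤ ∑ i ∈ S, b i := by
        rw [minSum_eq_inf' hk.le]; exact inf'_le _ (mem_powersetCard_univ.2 hS)
    _ < ∑ i, b i :=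
      sum_lt_sum_of_subset (subset_univ S) (mem_univ i) hi (hb i) fun j _ _ => (hb j).le

end minSum

lemma List.nodup_tails {α : Type*} (l : List α) : l.tails.Nodup := by
  induction l with
  | nil => simp
  | cons a l ih =>
    refine List.Nodup.cons (fun h => ?_) ih
    simpa using ((List.mem_tails _ _).1 h).length_le

section PathProducts

open Finset Filter

variable {Ω : Type*} [MeasurableSpace Ω] {μ : Measure Ω} [IsProbabilityMeasure μ]

lemma ProbabilityTheory.iIndepFun.meas_ge_prod_le {ι : Type*} {Y : ι → Ω → ℝ}
    (hindep : iIndepFun Y μ)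
    (hY : ∀ i, Measurable (Y i)) (hY01 : ∀ i, ∀ᵐ ω ∂μ, Y i ω ∈ Set.Icc 0 1)
    (T : Finset ι) {ε : ℝ} (hε : 0 < ε) :
    μ {ω | ε ≤ ∏ i ∈ T, Y i ω} ≤ ENNReal.ofReal ((∏ i ∈ T, ∫ ω, Y i ω ∂μ) / ε) := by
  have hbd : ∀ᵐ ω ∂μ, ∀ i ∈ T, Y i ω ∈ Set.Icc 0 1 :=
    (eventually_all_finset T).2 fun i _ => hY01 i
  have hnonneg : ∀ᵐ ω ∂μ, 0 ≤ ∏ i ∈ T, Y i ω := by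
    filter_upwards [hbd] with ω hω using prod_nonneg fun i hi => (hω i hi).1
  have hint : Integrable (fun ω => ∏ i ∈ T, Y i ω) μ := by
    refine Integrable.of_bound (measurable_prod T fun i _ => hY i).aestronglyMeasurable 1 ?_
    filter_upwards [hbd, hnonneg] with ω hω h0
    rw [Real.norm_eq_abs, abs_of_nonneg h0]
    exact prod_le_one (fun i hi => (hω i hi).1) fun i hi => (hω i hi).2
  have hmean : ∫ ω, ∏ i ∈ T, Y i ω ∂μ = ∏ i ∈ T, ∫ ω, Y i ω ∂μ := by
    simp_rw [← prod_coe_sort T]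
    exact (hindep.precomp Subtype.val_injective).integral_fun_prod_eq_prod_integral
      fun i => (hY i).aestronglyMeasurable
  have hmarkov := mul_meas_ge_le_integral_of_nonneg hnonneg hint ε
  rw [hmean] at hmarkov
  rw [← ofReal_measureReal]
  exact ENNReal.ofReal_le_ofReal ((le_div_iff₀' hε).2 hmarkov)

lemma ProbabilityTheory.iIndepFun.ae_eventually_pow_mul_prod_tails_lt_one {d : ℕ}
    {Y : Vtx d → Ω → ℝ} (hindep : iIndepFun Y μ) (hY : ∀ σ, Measurable (Y σ))
    (hY01 : ∀ σ, ∀ᵐ ω ∂μ, Y σ ω ∈ Set.Icc 0 1) {c t : ℝ} (hmean : ∀ σ, ∫ ω, Y σ ω ∂μ = c)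
    (ht : 0 < t) (hdtc : d * t * c < 1) :
    ∀ᵐ ω ∂μ, ∀ᶠ n in atTop, ∀ ν : Vtx d, ν.length = n →
      t ^ n * (ν.tail.tails.map fun σ => Y σ ω).prod < 1 := by
  classical
  set B : ℕ → Set Ω := fun n => ⋃ v : List.Vector (Fin d) n,
    {ω | (t ^ n)⁻¹ ≤ ∏ σ ∈ v.toList.tail.tails.toFinset, Y σ ω}
  have hc : 0 ≤ c :=
    hmean [] ▸ integral_nonneg_of_ae (by filter_upwards [hY01 []] with ω h using h.1)
  have hμB : ∀ n, μ (B n) ≤ ENNReal.ofReal (d * t * c) ^ n := by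
    rintro (_ | n)
    · -- at level `0` the path `[].tail.tails = [[]]` has one vertex, not `0`
      simpa using prob_le_one
    have hcard (v : List.Vector (Fin d) (n + 1)) : #v.toList.tail.tails.toFinset = n + 1 := by
      rw [List.toFinset_card_of_nodup (List.nodup_tails _), List.length_tails, List.length_tail,
        v.toList_length, Nat.add_sub_cancel]
    calc μ (B (n + 1))
        ≤ ∑ v : List.Vector (Fin d) (n + 1),
            μ {ω | (t ^ (n + 1))⁻¹ ≤ ∏ σ ∈ v.toList.tail.tails.toFinset, Y σ ω} :=
          measure_iUnion_fintype_le μ _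
      _ ≤ ∑ v : List.Vector (Fin d) (n + 1), ENNReal.ofReal ((t * c) ^ (n + 1)) := by
          gcongr with v
          refine (hindep.meas_ge_prod_le hY hY01 _ (by positivity)).trans_eq ?_
          rw [prod_congr rfl fun σ _ => hmean σ, prod_const, hcard, div_inv_eq_mul, mul_pow,
            mul_comm]
      _ = ENNReal.ofReal (d * t * c) ^ (n + 1) := by
          rw [sum_const, card_univ, card_vector, Fintype.card_fin, nsmul_eq_mul,
            ← ENNReal.ofReal_pow (by positivity), ← ENNReal.ofReal_natCast,
            ← ENNReal.ofReal_mul (by positivity)]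
          push_cast
          ring_nf
  have hsum : ∑' n, μ (B n) ≠ ⊤ := by
    refine ne_top_of_le_ne_top ?_ (ENNReal.tsum_le_tsum hμB)
    rw [ENNReal.tsum_geometric]
    exact ENNReal.inv_ne_top.2 (tsub_pos_of_lt (ENNReal.ofReal_lt_one.2 hdtc)).ne'
  filter_upwards [ae_eventually_notMem hsum] with ω hω
  filter_upwards [hω] with n hn ν hν
  have hnot : ¬ (t ^ n)⁻¹ ≤ ∏ σ ∈ ν.tail.tails.toFinset, Y σ ω := by
    subst hν
    exact fun h => hn (Set.mem_iUnion.2 ⟨⟨ν, rfl⟩, h⟩)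
  rw [List.prod_toFinset _ (List.nodup_tails _), not_le] at hnot
  simpa [mul_inv_cancel₀ (pow_pos ht n).ne'] using mul_lt_mul_of_pos_left hnot (pow_pos ht n)

end PathProducts

lemma pow_le_prod_map_inv_of_rpow {ι : Type*} (l : List ι) {f : ι → ℝ} (hf : ∀ i ∈ l, 0 < f i)
    {κ lam : ℝ} (hκ : 0 < κ) (hlam : 0 < lam) (n : ℕ)
    (h : (κ ^ lam) ^ n * (l.map fun i => f i ^ lam).prod < 1) :
    κ ^ n ≤ (l.map fun i => (f i)⁻¹).prod := by
  have hP : 0 < (l.map f).prod := List.prod_pos (by simpa using hf)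
  rw [Real.list_prod_map_rpow' l f (fun i hi => (hf i hi).le), Real.rpow_pow_comm hκ.le,
    ← Real.mul_rpow (by positivity) hP.le, Real.rpow_lt_one_iff' (by positivity) hlam] at h
  calc κ ^ n ≤ (l.map f).prod⁻¹ := by rw [← one_div, le_div_iff₀ hP]; exact h.le
    _ = (l.map fun i => (f i)⁻¹).prod := by rw [List.prod_inv, List.map_map]; rfl

theorem statement8_general (d r : ℕ) (hr : 0 < r) (hrd : r < d)
    {Ω : Type*} [MeasurableSpace Ω] (μ : Measure Ω) [IsProbabilityMeasure μ]
    -- the weighted-tree setup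
    (X : Vtx d → Ω → ℝ) (hmeas : ∀ ν, Measurable (X ν))
    (hval : ∀ ν ω, X ν ω ∈ Set.Ioc (0 : ℝ) 1)
    (hsum : ∀ ν : Vtx d, ∀ᵐ ω ∂μ, ∑ i : Fin d, X (i :: ν) ω = 1)
    (hindep : ProbabilityTheory.iIndepFun
        (fun ν ω => (fun i : Fin d => X (i :: ν) ω)) μ)
    (hident : ∀ ν ν' : Vtx d,
        Measure.map (fun ω => (fun i : Fin d => X (i :: ν) ω)) μ =
          Measure.map (fun ω => (fun i : Fin d => X (i :: ν') ω)) μ)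
    -- `Υ ν = min {X (νi₁) + ⋯ + X (νi_{d-r}) : 1 ≤ i₁ < ⋯ < i_{d-r} ≤ d}`
    (Υ : Vtx d → Ω → ℝ)
    (hΥ : ∀ ν ω, Υ ν ω = minSum d (d - r) (fun i => X (i :: ν) ω))
    -- the constants κ, λ
    (κ lam : ℝ) (hκ : 0 < κ) (hlam : 0 < lam)
    (hcond : (d : ℝ) * κ ^ lam * ∫ ω, (1 - Υ [] ω) ^ lam ∂μ < 1) :
    -- a.s. eventually, for every vertex `ν` at level `n`,
    -- `∏_{σ ∈ [root, p(ν)]} (1 - Υ σ)⁻¹ ≥ κ ^ n`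
    -- (the product is over the ancestors of the parent `ν.tail` of `ν`, inclusive)
    ∀ᵐ ω ∂μ, ∃ N : ℕ, ∀ n ≥ N, ∀ ν : Vtx d, ν.length = n →
      κ ^ n ≤ (ν.tail.tails.map fun σ => (1 - Υ σ ω)⁻¹).prod := by
  set offspring : Vtx d → Ω → Fin d → ℝ := fun ν ω i => X (i :: ν) ω
  set g : (Fin d → ℝ) → ℝ := fun b => (1 - minSum d (d - r) b) ^ lam
  set Y : Vtx d → Ω → ℝ := fun ν ω => (1 - Υ ν ω) ^ lam
  have hYg : Y = fun ν => g ∘ offspring ν := by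
    funext ν ω
    simp only [Y, g, offspring, Function.comp_apply, hΥ]
  have hg : Measurable g :=
    (measurable_const.sub (continuous_minSum (Nat.sub_le d r)).measurable).pow_const lam
  have hoffspring (ν : Vtx d) : Measurable (offspring ν) :=
    measurable_pi_lambda _ fun i => hmeas _
  have hΥ01 (ν : Vtx d) : ∀ᵐ ω ∂μ, Υ ν ω ∈ Set.Ioo 0 1 := by
    filter_upwards [hsum ν] with ω hω
    rw [hΥ]
    exact ⟨minSum_pos (by omega) (Nat.sub_le d r) fun i => (hval _ ω).1,
      hω ▸ minSum_lt_sum (by omega) fun i => (hval _ ω).1⟩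
  have hY01 (ν : Vtx d) : ∀ᵐ ω ∂μ, Y ν ω ∈ Set.Icc 0 1 := by
    filter_upwards [hΥ01 ν] with ω hω
    exact ⟨Real.rpow_nonneg (by linarith [hω.2]) _,
      Real.rpow_le_one (by linarith [hω.2]) (by linarith [hω.1]) hlam.le⟩
  have hmean (ν : Vtx d) : ∫ ω, Y ν ω ∂μ = ∫ ω, Y [] ω ∂μ := by
    simp only [hYg, Function.comp_apply]
    rw [← integral_map (hoffspring ν).aemeasurable hg.aestronglyMeasurable, hident ν [],
      integral_map (hoffspring []).aemeasurable hg.aestronglyMeasurable]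
  have hYindep : iIndepFun Y μ := hYg ▸ hindep.comp (fun _ => g) fun _ => hg
  have hlevel := hYindep.ae_eventually_pow_mul_prod_tails_lt_one
    (hYg ▸ fun ν => hg.comp (hoffspring ν)) hY01 hmean (Real.rpow_pos_of_pos hκ lam) hcond
  filter_upwards [hlevel, ae_all_iff.2 hΥ01] with ω hω hΥω
  obtain ⟨N, hN⟩ := Filter.eventually_atTop.1 hω
  exact ⟨N, fun n hn ν hν => pow_le_prod_map_inv_of_rpow _ (fun σ _ => sub_pos.2 (hΥω σ).2)
    hκ hlam n (hN n hn ν hν)⟩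

theorem statement8 (d r : ℕ) (hr : 0 < r) (hrd : r < d)
    {Ω : Type*} [MeasurableSpace Ω] (μ : Measure Ω) [IsProbabilityMeasure μ]
    -- the weighted-tree setup
    (X : Vtx d → Ω → ℝ) (hmeas : ∀ ν, Measurable (X ν))
    (hroot : ∀ ω, X [] ω = 1)
    (hval : ∀ ν ω, X ν ω ∈ Set.Ioc (0 : ℝ) 1)
    (hsum : ∀ ν : Vtx d, ∀ᵐ ω ∂μ, ∑ i : Fin d, X (i :: ν) ω = 1)
    (hindep : ProbabilityTheory.iIndepFun
        (fun ν ω => (fun i : Fin d => X (i :: ν) ω)) μ)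
    (hident : ∀ ν ν' : Vtx d,
        Measure.map (fun ω => (fun i : Fin d => X (i :: ν) ω)) μ =
          Measure.map (fun ω => (fun i : Fin d => X (i :: ν') ω)) μ)
    -- `Υ ν = min {X (νi₁) + ⋯ + X (νi_{d-r}) : 1 ≤ i₁ < ⋯ < i_{d-r} ≤ d}`
    (Υ : Vtx d → Ω → ℝ)
    (hΥ : ∀ ν ω, Υ ν ω = minSum d (d - r) (fun i => X (i :: ν) ω))
    -- the constants κ, λ
    (κ lam : ℝ) (hκ : 0 < κ) (hlam : 0 < lam)
    (hcond : (d : ℝ) * κ ^ lam * ∫ ω, (1 - Υ [] ω) ^ lam ∂μ < 1) :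
    -- a.s. eventually, for every vertex `ν` at level `n`,
    -- `∏_{σ ∈ [root, p(ν)]} (1 - Υ σ)⁻¹ ≥ κ ^ n`
    -- (the product is over the ancestors of the parent `ν.tail` of `ν`, inclusive)
    ∀ᵐ ω ∂μ, ∃ N : ℕ, ∀ n ≥ N, ∀ ν : Vtx d, ν.length = n →
      κ ^ n ≤ (ν.tail.tails.map fun σ => (1 - Υ σ ω)⁻¹).prod :=
  statement8_general d r hr hrd μ X hmeas hval hsum hindep hident Υ hΥ κ lam hκ hlam hcond
end

section
/- Let d ≥ 2 be an integer and let B₁,…,B_n be independent random variables each distributed as Beta(1/(d−1),1). Then for every real β with 0 < β ≤ e^{1−d}, P(∏_{i=1}^{n} B_i ≤ β^n) ≤ ((e·log(1/β)·β^{1/(d−1)})/(d−1))^n. -/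
/-!
Chernoff bound. For `0 ≤ s < a` a Beta(a,1) variable satisfies `E[B^{-s}] ≤ a / (a - s)`
(layer-cake formula, with tail `P(B^{-s} > t) ≤ t^{-a/s}` for `t ≥ 1`), so by Markov's inequality
and independence `P(∏ Bᵢ ≤ βⁿ) ≤ (β^s · a / (a - s))ⁿ`. With `L = log (1/β)` the choice
`s = a - 1/L` gives `β^s = e β^a` and `a / (a - s) = a L`; the hypothesis `β ≤ e^{1-d}`, i.e.
`L ≥ d - 1 = 1/a`, is exactly `s ≥ 0`.
-/

open MeasureTheory ProbabilityTheory

section BetaMoment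

variable {Ω : Type*} [MeasurableSpace Ω] {μ : Measure Ω} {X : Ω → ℝ} {a : ℝ}

lemma ae_pos_of_cdf (ha : 0 < a)
    (hcdf : ∀ x ∈ Set.Icc (0 : ℝ) 1, μ {ω | X ω ≤ x} = ENNReal.ofReal (x ^ a)) :
    ∀ᵐ ω ∂μ, 0 < X ω := by
  have : μ {ω | X ω ≤ 0} = 0 := by simp [hcdf 0 (by simp), Real.zero_rpow ha.ne']
  simpa [ae_iff, not_lt] using this

lemma measure_lt_rpow_neg_le
    (hcdf : ∀ x ∈ Set.Icc (0 : ℝ) 1, μ {ω | X ω ≤ x} = ENNReal.ofReal (x ^ a))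
    (hpos : ∀ᵐ ω ∂μ, 0 < X ω) {s t : ℝ} (hs : 0 < s) (ht : 1 ≤ t) :
    μ {ω | t < X ω ^ (-s)} ≤ ENNReal.ofReal (t ^ (-(a / s))) := by
  have ht0 : 0 < t := by linarith
  have hq : t ^ (-s)⁻¹ ∈ Set.Icc (0 : ℝ) 1 :=
    ⟨by positivity, Real.rpow_le_one_of_one_le_of_nonpos ht (by simp [hs.le])⟩
  calc μ {ω | t < X ω ^ (-s)} ≤ μ {ω | X ω ≤ t ^ (-s)⁻¹} := by
        refine measure_mono_ae ?_
        filter_upwards [hpos] with ω hω hlt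
        exact ((Real.lt_rpow_inv_iff_of_neg hω ht0 (neg_neg_of_pos hs)).mpr hlt).le
    _ = ENNReal.ofReal (t ^ (-(a / s))) := by
        rw [hcdf _ hq, ← Real.rpow_mul ht0.le]
        congr 2
        field_simp

lemma lintegral_Ioi_one_ofReal_rpow_neg {p : ℝ} (hp : 1 < p) :
    ∫⁻ t in Set.Ioi (1 : ℝ), ENNReal.ofReal (t ^ (-p)) = ENNReal.ofReal (1 / (p - 1)) := by
  rw [← ofReal_integral_eq_lintegral_ofReal (integrableOn_Ioi_rpow_of_lt (by linarith) one_pos)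
    (ae_restrict_of_forall_mem measurableSet_Ioi fun t ht ↦
      Real.rpow_nonneg (zero_le_one.trans (le_of_lt ht)) _),
    integral_Ioi_rpow_of_lt (by linarith) one_pos, Real.one_rpow]
  rw [show -p + 1 = -(p - 1) by ring, div_neg, neg_div, neg_neg]

lemma lintegral_ofReal_rpow_neg_le [IsProbabilityMeasure μ] (hX : Measurable X) (ha : 0 < a)
    (hcdf : ∀ x ∈ Set.Icc (0 : ℝ) 1, μ {ω | X ω ≤ x} = ENNReal.ofReal (x ^ a))
    {s : ℝ} (hs : 0 ≤ s) (hsa : s < a) :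
    ∫⁻ ω, ENNReal.ofReal (X ω ^ (-s)) ∂μ ≤ ENNReal.ofReal (a / (a - s)) := by
  rcases hs.eq_or_lt with rfl | hs
  · simp [div_self ha.ne']
  have hpos := ae_pos_of_cdf ha hcdf
  rw [lintegral_eq_lintegral_meas_lt μ
      (by filter_upwards [hpos] with ω hω using (Real.rpow_pos_of_pos hω _).le)
      (hX.pow_const _).aemeasurable,
    ← Set.Ioc_union_Ioi_eq_Ioi zero_le_one,
    lintegral_union measurableSet_Ioi (Set.Ioc_disjoint_Ioi le_rfl)]
  calc _ ≤ (∫⁻ _ in Set.Ioc (0 : ℝ) 1, 1) +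
        ∫⁻ t in Set.Ioi 1, ENNReal.ofReal (t ^ (-(a / s))) :=
        add_le_add (setLIntegral_mono measurable_const fun _ _ ↦ prob_le_one)
          (setLIntegral_mono' measurableSet_Ioi fun t ht ↦
            measure_lt_rpow_neg_le hcdf hpos hs (le_of_lt ht))
    _ = 1 + ENNReal.ofReal (1 / (a / s - 1)) := by
        rw [lintegral_Ioi_one_ofReal_rpow_neg ((one_lt_div hs).mpr hsa)]
        simp
    _ = ENNReal.ofReal (a / (a - s)) := by
        have hsa' : 0 < a - s := by linarith
        rw [← ENNReal.ofReal_one, ← ENNReal.ofReal_add zero_le_one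
          (one_div_nonneg.mpr (by rw [sub_nonneg]; exact ((one_lt_div hs).mpr hsa).le))]
        congr 1
        field_simp
        ring

end BetaMoment

lemma rpow_sub_one_div_log_one_div {β : ℝ} (hβ0 : 0 < β) (hβ1 : β ≠ 1) (a : ℝ) :
    β ^ (a - 1 / Real.log (1 / β)) = Real.exp 1 * β ^ a := by
  have hlog : Real.log β ≠ 0 := Real.log_ne_zero_of_pos_of_ne_one hβ0 hβ1
  rw [Real.rpow_def_of_pos hβ0, Real.rpow_def_of_pos hβ0, ← Real.exp_add, one_div β,
    Real.log_inv]
  congr 1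
  field_simp
  ring

lemma one_le_rpow_mul_prod_rpow_neg {ι : Type*} (s : Finset ι) {x : ι → ℝ}
    (hx : ∀ i ∈ s, 0 < x i) {b r : ℝ} (hr : 0 ≤ r) (hb : ∏ i ∈ s, x i ≤ b) :
    1 ≤ b ^ r * ∏ i ∈ s, x i ^ (-r) := by
  have hprod : 0 < ∏ i ∈ s, x i := Finset.prod_pos hx
  rw [Real.finsetProd_rpow s x (fun i hi ↦ (hx i hi).le), Real.rpow_neg hprod.le,
    ← div_eq_mul_inv, ← Real.div_rpow (hprod.le.trans hb) hprod.le]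
  exact Real.one_le_rpow ((one_le_div hprod).mpr hb) hr

lemma measure_prod_le_pow_le {Ω ι : Type*} [MeasurableSpace Ω] [Fintype ι] {μ : Measure Ω}
    {B : ι → Ω → ℝ} (hmeas : ∀ i, Measurable (B i)) (hindep : iIndepFun B μ)
    (hpos : ∀ i, ∀ᵐ ω ∂μ, 0 < B i ω) {b s : ℝ} (hb : 0 ≤ b) (hs : 0 ≤ s) {M : ENNReal}
    (hM : ∀ i, ∫⁻ ω, ENNReal.ofReal (B i ω ^ (-s)) ∂μ ≤ M) :
    μ {ω | ∏ i, B i ω ≤ b ^ Fintype.card ι} ≤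
      (ENNReal.ofReal (b ^ s) * M) ^ Fintype.card ι := by
  set Y : ι → Ω → ENNReal := fun i ω ↦ ENNReal.ofReal (B i ω ^ (-s))
  have hY : ∀ i, Measurable (Y i) := fun i ↦ ((hmeas i).pow_const _).ennreal_ofReal
  have hYindep : iIndepFun Y μ :=
    hindep.comp _ fun _ ↦ (measurable_id.pow_const _).ennreal_ofReal
  set c := ENNReal.ofReal (b ^ s) ^ Fintype.card ι
  calc _ ≤ μ {ω | 1 ≤ c * ∏ i, Y i ω} := by
        refine measure_mono_ae ?_
        filter_upwards [ae_all_iff.mpr hpos] with ω hω hle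
        have h := one_le_rpow_mul_prod_rpow_neg Finset.univ (fun i _ ↦ hω i) hs hle
        rw [← Real.rpow_pow_comm hb] at h
        calc 1 ≤ ENNReal.ofReal ((b ^ s) ^ Fintype.card ι * ∏ i, B i ω ^ (-s)) :=
              ENNReal.one_le_ofReal.mpr h
          _ = c * ∏ i, Y i ω := by
              rw [ENNReal.ofReal_mul (by positivity), ENNReal.ofReal_pow (by positivity),
                ENNReal.ofReal_prod_of_nonneg fun i _ ↦ Real.rpow_nonneg (hω i).le _]
    _ ≤ ∫⁻ ω, c * ∏ i, Y i ω ∂μ := by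
        simpa using mul_meas_ge_le_lintegral₀
          (aemeasurable_const.mul (Finset.univ.aemeasurable_prod fun i _ ↦ (hY i).aemeasurable)) 1
    _ = c * ∏ i, ∫⁻ ω, Y i ω ∂μ := by
        rw [lintegral_const_mul _ (Finset.univ.measurable_prod fun i _ ↦ hY i),
          lintegral_prod_eq_prod_lintegral_of_indepFun _ _ hYindep hY]
    _ ≤ c * M ^ Fintype.card ι := by
        gcongr
        exact Finset.prod_le_pow_card _ _ _ fun i _ ↦ hM i
    _ = (ENNReal.ofReal (b ^ s) * M) ^ Fintype.card ι := (mul_pow _ _ _).symm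

theorem statement10 (d : ℕ) (hd : 2 ≤ d) (n : ℕ)
    {Ω : Type*} [MeasurableSpace Ω] (μ : Measure Ω) [IsProbabilityMeasure μ]
    -- `B 1, …, B n` are independent Beta(1/(d-1), 1) random variables,
    -- i.e. with cumulative distribution function `x ^ (1/(d-1))` on `[0,1]`
    (B : Fin n → Ω → ℝ) (hmeas : ∀ i, Measurable (B i))
    (hindep : ProbabilityTheory.iIndepFun B μ)
    (hdist : ∀ i, ∀ x ∈ Set.Icc (0 : ℝ) 1,
        μ {ω | B i ω ≤ x} = ENNReal.ofReal (x ^ (1 / ((d : ℝ) - 1))))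
    (β : ℝ) (hβ0 : 0 < β) (hβ1 : β ≤ Real.exp (1 - (d : ℝ))) :
    μ {ω | ∏ i, B i ω ≤ β ^ n} ≤
      ENNReal.ofReal
        ((Real.exp 1 * Real.log (1 / β) * β ^ (1 / ((d : ℝ) - 1)) / ((d : ℝ) - 1)) ^ n) := by
  have hd1 : (1 : ℝ) ≤ (d : ℝ) - 1 := by
    have : (2 : ℝ) ≤ d := by exact_mod_cast hd
    linarith
  have hLd : (d : ℝ) - 1 ≤ Real.log (1 / β) := by
    have := Real.log_le_log hβ0 hβ1
    rw [Real.log_exp] at this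
    rw [one_div, Real.log_inv]
    linarith
  set a : ℝ := 1 / ((d : ℝ) - 1)
  set L : ℝ := Real.log (1 / β)
  have hL : 0 < L := by linarith
  have hβ1' : β ≠ 1 := (hβ1.trans_lt (Real.exp_lt_one_iff.mpr (by linarith))).ne
  have ha : 0 < a := by positivity
  have hs : 0 ≤ a - 1 / L := sub_nonneg.mpr (one_div_le_one_div_of_le (by linarith) hLd)
  have hsa : a - 1 / L < a := sub_lt_self _ (by positivity)
  have hchernoff := measure_prod_le_pow_le hmeas hindep (fun i ↦ ae_pos_of_cdf ha (hdist i))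
    hβ0.le hs fun i ↦ lintegral_ofReal_rpow_neg_le (hmeas i) ha (hdist i) hs hsa
  rw [Fintype.card_fin] at hchernoff
  have hbase : β ^ (a - 1 / L) * (a / (a - (a - 1 / L))) =
      Real.exp 1 * L * β ^ a / ((d : ℝ) - 1) := by
    rw [rpow_sub_one_div_log_one_div hβ0 hβ1', sub_sub_cancel, div_div_eq_mul_div, div_one]
    simp only [a]
    ring
  rwa [← ENNReal.ofReal_mul (by positivity), ← ENNReal.ofReal_pow (by positivity), hbase]
    at hchernoff
end

section
/- Let d ≥ 2 be an integer and let λ > 0 be a real number. Then ∫₀¹ (1 − x^{1/λ})^{1/(d−1)} dx < λ^{−1/(d−1)}. -/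
/-!
Since `t ↦ t ^ (1 / (d - 1))` is concave on `[0, ∞)`, Jensen's inequality bounds the integral by
`(∫₀¹ (1 - x ^ (1 / λ)) dx) ^ (1 / (d - 1)) = (1 / (1 + λ)) ^ (1 / (d - 1))`, and
`1 / (1 + λ) < 1 / λ`.
-/

open Real MeasureTheory Set intervalIntegral
open scoped Interval

theorem setAverage_rpow_le_rpow_setAverage {α : Type*} [MeasurableSpace α] {μ : Measure α}
    {t : Set α} {f : α → ℝ} {p : ℝ} (hp₀ : 0 ≤ p) (hp₁ : p ≤ 1) (h₀ : μ t ≠ 0) (ht : μ t ≠ ⊤)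
    (hf₀ : ∀ᵐ x ∂μ.restrict t, 0 ≤ f x) (hfi : IntegrableOn f t μ)
    (hfpi : IntegrableOn (fun x ↦ f x ^ p) t μ) :
    ⨍ x in t, f x ^ p ∂μ ≤ (⨍ x in t, f x ∂μ) ^ p :=
  (concaveOn_rpow hp₀ hp₁).le_map_set_average (continuous_rpow_const hp₀).continuousOn
    isClosed_Ici h₀ ht hf₀ hfi hfpi

theorem integral_one_sub_rpow_zero_one {r : ℝ} (hr : -1 < r) :
    ∫ x in (0 : ℝ)..1, (1 - x ^ r) = r / (r + 1) := by
  have hr₁ : r + 1 ≠ 0 := by linarith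
  rw [integral_sub intervalIntegrable_const (intervalIntegral.intervalIntegrable_rpow' hr),
    integral_rpow (Or.inl hr), one_rpow, zero_rpow hr₁, intervalIntegral.integral_const]
  field_simp
  ring

theorem one_div_one_add_rpow_lt_rpow_neg {lam p : ℝ} (hlam : 0 < lam) (hp : 0 < p) :
    (1 / (1 + lam)) ^ p < lam ^ (-p) := by
  rw [rpow_neg hlam.le, ← inv_rpow hlam.le, one_div]
  exact rpow_lt_rpow (by positivity) (inv_strictAnti₀ hlam (by linarith)) hp

theorem statement13 (d : ℕ) (hd : 2 ≤ d) (lam : ℝ) (hlam : 0 < lam) :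
    ∫ x in (0 : ℝ)..1, (1 - x ^ (1 / lam)) ^ (1 / ((d : ℝ) - 1)) <
      lam ^ (-(1 / ((d : ℝ) - 1))) := by
  set p : ℝ := 1 / ((d : ℝ) - 1)
  have hd₁ : (1 : ℝ) ≤ (d : ℝ) - 1 := by
    have : (2 : ℝ) ≤ d := by exact_mod_cast hd
    linarith
  have hp₀ : 0 < p := by positivity
  have hp₁ : p ≤ 1 := div_le_one_of_le₀ hd₁ (by linarith)
  have hlam' : 0 < 1 / lam := by positivity
  have hcont : Continuous fun x : ℝ ↦ 1 - x ^ (1 / lam) :=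
    continuous_const.sub (continuous_rpow_const hlam'.le)
  have hf₀ : ∀ᵐ x ∂volume.restrict (Ι (0 : ℝ) 1), 0 ≤ 1 - x ^ (1 / lam) := by
    refine (ae_restrict_iff' measurableSet_uIoc).2 (ae_of_all _ fun x hx ↦ ?_)
    rw [uIoc_of_le zero_le_one] at hx
    exact sub_nonneg.2 (rpow_le_one hx.1.le hx.2 hlam'.le)
  have hjensen := setAverage_rpow_le_rpow_setAverage hp₀.le hp₁ (by simp) (by simp) hf₀
    hcont.integrableOn_uIoc ((continuous_rpow_const hp₀.le).comp hcont).integrableOn_uIoc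
  simp only [interval_average_eq, sub_zero, inv_one, one_smul] at hjensen
  calc _ ≤ _ := hjensen
    _ = (1 / (1 + lam)) ^ p := by
      rw [integral_one_sub_rpow_zero_one (by linarith)]
      field_simp
    _ < lam ^ (-p) := one_div_one_add_rpow_lt_rpow_neg hlam hp₀
end

section
/- Let r < d be positive integers with d ≥ 2. Let (B₁,…,B_d) be a Dirichlet(1/(d−1),…,1/(d−1)) random vector of length d and set Υ = min{B_{i₁}+B_{i₂}+⋯+B_{i_{d−r}} : 1 ≤ i₁ < i₂ < ⋯ < i_{d−r} ≤ d}. Then for every ε with 0 ≤ ε ≤ d−r, P(Υ ≤ ε) ≤ d·(ε/(d−r))^{1/(d−1)}. -/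
open MeasureTheory ProbabilityTheory

/-!
If some `d - r` coordinates of `B` sum to at most `ε`, one of them is at most
`t = ε / (d - r)`, so a union bound reduces the claim to `P(Bᵢ ≤ t) ≤ t ^ (1 / (d - 1))`.
Write `Bᵢ = Gᵢ / (Gᵢ + T)` with `T = ∑_{j ≠ i} Gⱼ`, independent of `Gᵢ`. Gamma laws of equal
rate convolve by adding shapes, so `T ~ Gamma((d - 1) a, 1) = Exp(1)` for `a = 1 / (d - 1)`.
Given `Gᵢ = x`, the event `Bᵢ ≤ t` is `T ≥ (1 - t) x / t`, of probability `exp (-(1 - t) x / t)`;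
averaging over `Gᵢ ~ Gamma(a, 1)` gives the Laplace transform `(1 + (1 - t) / t) ^ (-a) = t ^ a`.
-/

open Real Set
open scoped ENNReal

lemma integral_rpow_mul_sub_rpow {a b z : ℝ} (ha : 0 < a) (hb : 0 < b) (hz : 0 < z) :
    ∫ x in (0 : ℝ)..z, x ^ (a - 1) * (z - x) ^ (b - 1) = beta a b * z ^ (a + b - 1) := by
  apply Complex.ofReal_injective
  have hbeta : Complex.betaIntegral a b = (beta a b : ℂ) := by
    rw [Complex.betaIntegral_eq_Gamma_mul_div _ _ (by simpa) (by simpa), beta,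
      ← Complex.ofReal_add, Complex.Gamma_ofReal, Complex.Gamma_ofReal, Complex.Gamma_ofReal]
    norm_cast
  rw [← intervalIntegral.integral_ofReal, intervalIntegral.integral_congr
    (g := fun x : ℝ => (x : ℂ) ^ ((a : ℂ) - 1) * ((z : ℂ) - x) ^ ((b : ℂ) - 1))]
  · rw [Complex.betaIntegral_scaled _ _ hz, hbeta, Complex.ofReal_mul, mul_comm,
      Complex.ofReal_cpow hz.le]
    norm_cast
  · intro x hx
    rw [uIcc_of_le hz.le] at hx
    simp only
    rw [Complex.ofReal_mul, Complex.ofReal_cpow hx.1, Complex.ofReal_cpow (sub_nonneg.2 hx.2)]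
    norm_cast

namespace ProbabilityTheory

lemma measurable_gammaPDF (a r : ℝ) : Measurable (gammaPDF a r) :=
  (measurable_gammaPDFReal a r).ennreal_ofReal

lemma gammaPDF_lconvolution_of_neg {a b r z : ℝ} (hz : z < 0) :
    (gammaPDF a r ⋆ₗ gammaPDF b r) z = 0 := by
  refine lintegral_eq_zero_of_ae_eq_zero (ae_of_all _ fun x => ?_)
  rcases lt_or_ge x 0 with hx | hx
  · simp [gammaPDF_of_neg hx]
  · simp [gammaPDF_of_neg (show -x + z < 0 by linarith)]

lemma gammaPDF_lconvolution_of_pos {a b r z : ℝ} (ha : 0 < a) (hb : 0 < b) (hr : 0 < r)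
    (hz : 0 < z) : (gammaPDF a r ⋆ₗ gammaPDF b r) z = gammaPDF (a + b) r z := by
  set f : ℝ → ℝ := fun x => gammaPDFReal a r x * gammaPDFReal b r (z - x) with hf
  set C := r ^ a / Gamma a * (r ^ b / Gamma b) * exp (-(r * z))
  have hf_Icc : ∀ x ∈ Icc 0 z, f x = C * (x ^ (a - 1) * (z - x) ^ (b - 1)) := by
    intro x hx
    have hexp : exp (-(r * x)) * exp (-(r * (z - x))) = exp (-(r * z)) := by
      rw [← exp_add]; ring_nf
    simp only [hf, gammaPDFReal, if_pos hx.1, if_pos (sub_nonneg.2 hx.2), C, ← hexp]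
    ring
  have hf_compl : ∀ x ∉ Icc 0 z, f x = 0 := by
    intro x hx
    rcases not_and_or.1 hx with hx | hx
    · simp [hf, gammaPDFReal, hx]
    · simp [hf, gammaPDFReal, sub_nonneg, hx]
  have hintegral : ∫ x, f x = gammaPDFReal (a + b) r z := by
    rw [← setIntegral_eq_integral_of_forall_compl_eq_zero hf_compl, integral_Icc_eq_integral_Ioc,
      ← intervalIntegral.integral_of_le hz.le,
      intervalIntegral.integral_congr (fun x hx => hf_Icc x (by rwa [uIcc_of_le hz.le] at hx)),
      intervalIntegral.integral_const_mul, integral_rpow_mul_sub_rpow ha hb hz,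
      gammaPDFReal, if_pos hz.le, beta, rpow_add hr]
    have := Gamma_pos_of_pos ha
    have := Gamma_pos_of_pos hb
    have := Gamma_pos_of_pos (add_pos ha hb)
    simp only [C]
    field_simp
  have hf_nonneg : 0 ≤ f := fun x => mul_nonneg (gammaPDFReal_nonneg ha hr x)
    (gammaPDFReal_nonneg hb hr _)
  calc (gammaPDF a r ⋆ₗ gammaPDF b r) z = ∫⁻ x, ENNReal.ofReal (f x) := by
        refine lintegral_congr fun x => ?_
        rw [gammaPDF, gammaPDF, ← ENNReal.ofReal_mul (gammaPDFReal_nonneg ha hr x),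
          neg_add_eq_sub]
    _ = ENNReal.ofReal (∫ x, f x) := by
        refine (ofReal_integral_eq_lintegral_ofReal (.of_integral_ne_zero ?_)
          (ae_of_all _ hf_nonneg)).symm
        rw [hintegral]
        exact (gammaPDFReal_pos (add_pos ha hb) hr hz).ne'
    _ = gammaPDF (a + b) r z := by rw [hintegral, gammaPDF]

lemma gammaMeasure_conv_gammaMeasure {a b r : ℝ} (ha : 0 < a) (hb : 0 < b) (hr : 0 < r) :
    gammaMeasure a r ∗ gammaMeasure b r = gammaMeasure (a + b) r := by
  rw [gammaMeasure, gammaMeasure, conv_withDensity_eq_lconvolution (measurable_gammaPDF a r)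
    (measurable_gammaPDF b r)]
  refine withDensity_congr_ae ?_
  filter_upwards [Measure.ae_ne volume 0] with z hz
  rcases hz.lt_or_gt with hz | hz
  · rw [gammaPDF_lconvolution_of_neg hz, gammaPDF_of_neg hz]
  · exact gammaPDF_lconvolution_of_pos ha hb hr hz

lemma gammaMeasure_one_Ici {r c : ℝ} (hr : 0 < r) (hc : 0 ≤ c) :
    gammaMeasure 1 r (Ici c) = ENNReal.ofReal (exp (-(r * c))) := by
  have hpdf : ∀ y ∈ Ici c, gammaPDF 1 r y = ENNReal.ofReal (r * exp (-r * y)) := by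
    intro y hy
    rw [gammaPDF_of_nonneg (hc.trans hy), Gamma_one, rpow_one, sub_self, rpow_zero, neg_mul]
    ring_nf
  have hint : IntegrableOn (fun y => r * exp (-r * y)) (Ioi c) :=
    (integrableOn_exp_mul_Ioi (neg_lt_zero.2 hr) c).const_mul r
  rw [gammaMeasure, withDensity_apply _ measurableSet_Ici,
    setLIntegral_congr_fun measurableSet_Ici hpdf,
    ← ofReal_integral_eq_lintegral_ofReal ((integrableOn_Ici_iff_integrableOn_Ioi).2 hint)
      (ae_of_all _ fun y => by positivity),
    integral_Ici_eq_integral_Ioi, integral_const_mul, integral_exp_mul_Ioi (neg_lt_zero.2 hr)]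
  congr 1
  field_simp

lemma lintegral_exp_neg_mul_gammaMeasure {a r s : ℝ} (ha : 0 < a) (hr : 0 ≤ r)
    (hrs : 0 < r + s) :
    ∫⁻ x, ENNReal.ofReal (exp (-(s * x))) ∂gammaMeasure a r
      = ENNReal.ofReal ((r / (r + s)) ^ a) := by
  have hpdf : ∀ x, gammaPDF a r x * ENNReal.ofReal (exp (-(s * x)))
      = ENNReal.ofReal ((r / (r + s)) ^ a) * gammaPDF a (r + s) x := by
    intro x
    rcases lt_or_ge x 0 with hx | hx
    · simp [gammaPDF_of_neg hx]
    rw [gammaPDF_of_nonneg hx, gammaPDF_of_nonneg hx, ← ENNReal.ofReal_mul (by positivity),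
      ← ENNReal.ofReal_mul (by positivity), div_rpow hr hrs.le]
    congr 1
    have hexp : exp (-(r * x)) * exp (-(s * x)) = exp (-((r + s) * x)) := by
      rw [← exp_add]; ring_nf
    rw [← hexp]
    field_simp
  rw [gammaMeasure, lintegral_withDensity_eq_lintegral_mul _ (measurable_gammaPDF a r)
    (by fun_prop)]
  simp only [Pi.mul_apply, hpdf]
  rw [lintegral_const_mul' _ _ ENNReal.ofReal_ne_top, lintegral_gammaPDF_eq_one ha hrs, mul_one]

lemma ae_pos_gammaMeasure (a r : ℝ) : ∀ᵐ x ∂gammaMeasure a r, 0 < x := by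
  rw [gammaMeasure, ae_withDensity_iff (measurable_gammaPDF a r)]
  filter_upwards [volume.ae_ne 0] with x hx hpdf
  exact (not_lt.1 fun h => hpdf (gammaPDF_of_neg h)).lt_of_ne' hx

lemma gammaMeasure_prod_gammaMeasure_one_setOf_le {a r t : ℝ} (ha : 0 < a) (hr : 0 < r)
    (ht0 : 0 < t) (ht1 : t ≤ 1) :
    (gammaMeasure a r).prod (gammaMeasure 1 r) {p | (1 - t) * p.1 ≤ t * p.2}
      ≤ ENNReal.ofReal (t ^ a) := by
  have : IsProbabilityMeasure (gammaMeasure 1 r) := isProbabilityMeasure_gammaMeasure one_pos hr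
  set s := r * (1 - t) / t
  have hs : 0 ≤ s := div_nonneg (mul_nonneg hr.le (sub_nonneg.2 ht1)) ht0.le
  have hslice : ∀ x, gammaMeasure 1 r (Prod.mk x ⁻¹' {p | (1 - t) * p.1 ≤ t * p.2})
      ≤ ENNReal.ofReal (exp (-(s * x))) := by
    intro x
    rcases le_or_gt 0 x with hx | hx
    · have hpre :
          Prod.mk x ⁻¹' {p : ℝ × ℝ | (1 - t) * p.1 ≤ t * p.2} = Ici ((1 - t) * x / t) := by
        ext y
        simp only [mem_preimage, mem_ofPred_eq, mem_Ici, div_le_iff₀ ht0, mul_comm t]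
      rw [hpre, gammaMeasure_one_Ici hr (by have := sub_nonneg.2 ht1; positivity)]
      apply le_of_eq
      congr 2
      ring
    · calc _ ≤ 1 := prob_le_one
        _ ≤ ENNReal.ofReal (exp (-(s * x))) := by
          rw [ENNReal.one_le_ofReal, one_le_exp_iff]
          nlinarith
  calc (gammaMeasure a r).prod (gammaMeasure 1 r) {p | (1 - t) * p.1 ≤ t * p.2}
      = ∫⁻ x, gammaMeasure 1 r (Prod.mk x ⁻¹' {p | (1 - t) * p.1 ≤ t * p.2}) ∂gammaMeasure a r :=
        Measure.prod_apply (measurableSet_le (by fun_prop) (by fun_prop))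
    _ ≤ ∫⁻ x, ENNReal.ofReal (exp (-(s * x))) ∂gammaMeasure a r := lintegral_mono hslice
    _ = ENNReal.ofReal (t ^ a) := by
      rw [lintegral_exp_neg_mul_gammaMeasure ha hr.le (by positivity)]
      congr 2
      simp only [s]
      field_simp
      ring

section RandomVariables

variable {Ω : Type*} [MeasurableSpace Ω] {μ : Measure Ω}

lemma ae_pos_of_map_eq_gammaMeasure {X : Ω → ℝ} {a r : ℝ} (hX : Measurable X)
    (hXlaw : μ.map X = gammaMeasure a r) : ∀ᵐ ω ∂μ, 0 < X ω :=
  ae_of_ae_map hX.aemeasurable (hXlaw ▸ ae_pos_gammaMeasure a r)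

lemma IndepFun.map_add_eq_gammaMeasure {X Y : Ω → ℝ} {a b r : ℝ} (ha : 0 < a) (hb : 0 < b)
    (hr : 0 < r) (hX : Measurable X) (hY : Measurable Y) (hXY : IndepFun X Y μ)
    (hXlaw : μ.map X = gammaMeasure a r) (hYlaw : μ.map Y = gammaMeasure b r) :
    μ.map (X + Y) = gammaMeasure (a + b) r := by
  have := isProbabilityMeasure_gammaMeasure ha hr
  have := isProbabilityMeasure_gammaMeasure hb hr
  rw [hXY.map_add_eq_map_conv_map' hX hY (hXlaw ▸ inferInstance) (hYlaw ▸ inferInstance), hXlaw,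
    hYlaw, gammaMeasure_conv_gammaMeasure ha hb hr]

lemma iIndepFun.map_finsetSum_eq_gammaMeasure {ι : Type*} {G : ι → Ω → ℝ} {a : ι → ℝ} {r : ℝ}
    (hGindep : iIndepFun G μ) (ha : ∀ i, 0 < a i) (hr : 0 < r) (hG : ∀ i, Measurable (G i))
    (hGlaw : ∀ i, μ.map (G i) = gammaMeasure (a i) r) {s : Finset ι} (hs : s.Nonempty) :
    μ.map (∑ i ∈ s, G i) = gammaMeasure (∑ i ∈ s, a i) r := by
  induction hs using Finset.Nonempty.cons_induction with
  | singleton i => simpa using hGlaw i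
  | cons i s hi hs ih =>
    rw [Finset.sum_cons, Finset.sum_cons, IndepFun.map_add_eq_gammaMeasure (Y := ∑ j ∈ s, G j)
      (ha i) (Finset.sum_pos (fun j _ => ha j) hs) hr (hG i) (by fun_prop)
      (hGindep.indepFun_finsetSum_of_notMem hG hi).symm (hGlaw i) ih]

lemma IndepFun.measure_div_add_le_rpow {X Y : Ω → ℝ} {a r t : ℝ} (ha : 0 < a) (hr : 0 < r)
    (hX : Measurable X) (hY : Measurable Y) (hXY : IndepFun X Y μ)
    (hXlaw : μ.map X = gammaMeasure a r) (hYlaw : μ.map Y = gammaMeasure 1 r)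
    (ht0 : 0 ≤ t) (ht1 : t ≤ 1) :
    μ {ω | X ω / (X ω + Y ω) ≤ t} ≤ ENNReal.ofReal (t ^ a) := by
  have hpos : ∀ᵐ ω ∂μ, 0 < X ω ∧ 0 < Y ω :=
    (ae_pos_of_map_eq_gammaMeasure hX hXlaw).and (ae_pos_of_map_eq_gammaMeasure hY hYlaw)
  rcases ht0.eq_or_lt with rfl | ht0
  · refine le_of_eq_of_le (measure_eq_zero_iff_ae_notMem.2 ?_) zero_le
    filter_upwards [hpos] with ω ⟨hXω, hYω⟩
    simpa using div_pos hXω (add_pos hXω hYω)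
  have hS : MeasurableSet {p : ℝ × ℝ | (1 - t) * p.1 ≤ t * p.2} :=
    measurableSet_le (by fun_prop) (by fun_prop)
  have := isProbabilityMeasure_gammaMeasure ha hr
  have := isProbabilityMeasure_gammaMeasure one_pos hr
  calc μ {ω | X ω / (X ω + Y ω) ≤ t}
      ≤ μ ((fun ω => (X ω, Y ω)) ⁻¹' {p | (1 - t) * p.1 ≤ t * p.2}) := by
        refine measure_mono_ae ?_
        filter_upwards [hpos] with ω ⟨hXω, hYω⟩ hω
        change X ω / (X ω + Y ω) ≤ t at hω
        rw [div_le_iff₀ (add_pos hXω hYω)] at hω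
        change (1 - t) * X ω ≤ t * Y ω
        linarith
    _ = (gammaMeasure a r).prod (gammaMeasure 1 r) {p | (1 - t) * p.1 ≤ t * p.2} := by
        rw [← Measure.map_apply (hX.prodMk hY) hS,
          (indepFun_iff_map_prod_eq_prod_map_map' hX.aemeasurable hY.aemeasurable
            (hXlaw ▸ inferInstance) (hYlaw ▸ inferInstance)).1 hXY,
          hXlaw, hYlaw]
    _ ≤ ENNReal.ofReal (t ^ a) := gammaMeasure_prod_gammaMeasure_one_setOf_le ha hr ht0 ht1

lemma measure_div_sum_le_rpow {ι : Type*} [Fintype ι] {G : ι → Ω → ℝ} {a r t : ℝ}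
    (ha : 0 < a) (hcard : ((Fintype.card ι : ℝ) - 1) * a = 1) (hr : 0 < r)
    (hG : ∀ i, Measurable (G i)) (hGindep : iIndepFun G μ)
    (hGlaw : ∀ i, μ.map (G i) = gammaMeasure a r) (i : ι) (ht0 : 0 ≤ t) (ht1 : t ≤ 1) :
    μ {ω | G i ω / ∑ j, G j ω ≤ t} ≤ ENNReal.ofReal (t ^ a) := by
  classical
  set T := ∑ j ∈ Finset.univ.erase i, G j
  have hcard_erase : ((Finset.univ.erase i).card : ℝ) = Fintype.card ι - 1 := by
    rw [Finset.card_erase_of_mem (Finset.mem_univ i), Finset.card_univ,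
      Nat.cast_sub (Fintype.card_pos_iff.2 ⟨i⟩), Nat.cast_one]
  have hne : (Finset.univ.erase i).Nonempty := by
    rw [← Finset.card_pos, ← Nat.cast_pos (α := ℝ), hcard_erase]
    by_contra! h
    nlinarith
  have hTlaw : μ.map T = gammaMeasure 1 r := by
    rw [hGindep.map_finsetSum_eq_gammaMeasure (fun _ => ha) hr hG hGlaw hne, Finset.sum_const,
      nsmul_eq_mul, hcard_erase, hcard]
  have hsum : ∀ ω, ∑ j, G j ω = G i ω + T ω := fun ω => by
    simp only [T, Finset.sum_apply]
    exact (Finset.add_sum_erase _ _ (Finset.mem_univ i)).symm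
  simp only [hsum]
  exact (hGindep.indepFun_finsetSum_of_notMem hG (Finset.notMem_erase i _)).symm
    |>.measure_div_add_le_rpow ha hr (hG i) (by fun_prop) (hGlaw i) hTlaw ht0 ht1

end RandomVariables

end ProbabilityTheory

lemma exists_card_eq_minSum_eq_sum {d k : ℕ} (hk : k ≤ d) (b : Fin d → ℝ) :
    ∃ S : Finset (Fin d), S.card = k ∧ minSum d k b = ∑ i ∈ S, b i := by
  set sums := {x | ∃ S : Finset (Fin d), S.card = k ∧ x = ∑ i ∈ S, b i}
  have hfin : sums.Finite :=
    (finite_range fun S : Finset (Fin d) => ∑ i ∈ S, b i).subset fun _ ⟨S, _, hS⟩ => ⟨S, hS.symm⟩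
  obtain ⟨S, -, hS⟩ := Finset.exists_subset_card_eq (s := (Finset.univ : Finset (Fin d)))
    (by simpa)
  have hne : sums.Nonempty := ⟨_, S, hS, rfl⟩
  exact hne.csInf_mem hfin

lemma exists_le_div_of_minSum_le {d k : ℕ} (hk : 0 < k) (hkd : k ≤ d) {b : Fin d → ℝ} {ε : ℝ}
    (h : minSum d k b ≤ ε) : ∃ i, b i ≤ ε / k := by
  obtain ⟨S, hSk, hS⟩ := exists_card_eq_minSum_eq_sum hkd b
  have hSne : S.Nonempty := Finset.card_pos.1 (hSk ▸ hk)
  obtain ⟨i, -, hi⟩ := Finset.exists_le_of_sum_le hSne (f := b) (g := fun _ => ε / k) (by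
    rw [Finset.sum_const, hSk, nsmul_eq_mul, mul_div_cancel₀ _ (by positivity), ← hS]
    exact h)
  exact ⟨i, hi⟩

theorem statement14_general (d r : ℕ) (hrd : r < d) (hd : 2 ≤ d)
    {Ω : Type*} [MeasurableSpace Ω] (μ : Measure Ω) [IsProbabilityMeasure μ]
    -- the Dirichlet(1/(d-1), …, 1/(d-1)) vector `B`, built from d i.i.d.
    -- Gamma(1/(d-1), 1) random variables
    (G : Fin d → Ω → ℝ) (hGmeas : ∀ i, Measurable (G i))
    (hGindep : ProbabilityTheory.iIndepFun G μ)
    (hGdist : ∀ i, Measure.map (G i) μ =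
      ProbabilityTheory.gammaMeasure (1 / ((d : ℝ) - 1)) 1)
    (B : Fin d → Ω → ℝ) (hB : ∀ i ω, B i ω = G i ω / ∑ j, G j ω)
    -- `Υ = min {B i₁ + ⋯ + B i_{d-r} : 1 ≤ i₁ < ⋯ < i_{d-r} ≤ d}`
    (Υ : Ω → ℝ) (hΥ : ∀ ω, Υ ω = minSum d (d - r) (fun i => B i ω))
    (ε : ℝ) (hε0 : 0 ≤ ε) (hε1 : ε ≤ (d : ℝ) - (r : ℝ)) :
    μ {ω | Υ ω ≤ ε} ≤
      ENNReal.ofReal ((d : ℝ) * (ε / ((d : ℝ) - (r : ℝ))) ^ (1 / ((d : ℝ) - 1))) := by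
  have hdr : (0 : ℝ) < d - r := sub_pos.2 (by exact_mod_cast hrd)
  have hd1 : (0 : ℝ) < d - 1 := sub_pos.2 (by exact_mod_cast hd)
  set t := ε / ((d : ℝ) - r)
  have hsub : {ω | Υ ω ≤ ε} ⊆ ⋃ i, {ω | G i ω / ∑ j, G j ω ≤ t} := by
    intro ω hω
    obtain ⟨i, hi⟩ := exists_le_div_of_minSum_le (Nat.sub_pos_of_lt hrd) (Nat.sub_le d r)
      ((hΥ ω).symm.trans_le hω)
    rw [Nat.cast_sub hrd.le, hB] at hi
    exact mem_iUnion.2 ⟨i, hi⟩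
  have hmarginal :
      ∀ i, μ {ω | G i ω / ∑ j, G j ω ≤ t} ≤ ENNReal.ofReal (t ^ (1 / ((d : ℝ) - 1))) :=
    fun i => measure_div_sum_le_rpow (by positivity) (by simp [hd1.ne']) one_pos hGmeas hGindep
      hGdist i (div_nonneg hε0 hdr.le) ((div_le_one hdr).2 hε1)
  calc μ {ω | Υ ω ≤ ε} ≤ ∑ i, μ {ω | G i ω / ∑ j, G j ω ≤ t} :=
        (measure_mono hsub).trans (measure_iUnion_fintype_le _ _)
    _ ≤ ∑ _i : Fin d, ENNReal.ofReal (t ^ (1 / ((d : ℝ) - 1))) :=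
        Finset.sum_le_sum fun i _ => hmarginal i
    _ = ENNReal.ofReal ((d : ℝ) * t ^ (1 / ((d : ℝ) - 1))) := by
      rw [Finset.sum_const, Finset.card_univ, Fintype.card_fin, nsmul_eq_mul,
        ENNReal.ofReal_mul (by positivity), ENNReal.ofReal_natCast]

theorem statement14 (d r : ℕ) (hr : 0 < r) (hrd : r < d) (hd : 2 ≤ d)
    {Ω : Type*} [MeasurableSpace Ω] (μ : Measure Ω) [IsProbabilityMeasure μ]
    -- the Dirichlet(1/(d-1), …, 1/(d-1)) vector `B`, built from d i.i.d.
    -- Gamma(1/(d-1), 1) random variables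
    (G : Fin d → Ω → ℝ) (hGmeas : ∀ i, Measurable (G i))
    (hGindep : ProbabilityTheory.iIndepFun G μ)
    (hGdist : ∀ i, Measure.map (G i) μ =
      ProbabilityTheory.gammaMeasure (1 / ((d : ℝ) - 1)) 1)
    (B : Fin d → Ω → ℝ) (hB : ∀ i ω, B i ω = G i ω / ∑ j, G j ω)
    -- `Υ = min {B i₁ + ⋯ + B i_{d-r} : 1 ≤ i₁ < ⋯ < i_{d-r} ≤ d}`
    (Υ : Ω → ℝ) (hΥ : ∀ ω, Υ ω = minSum d (d - r) (fun i => B i ω))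
    (ε : ℝ) (hε0 : 0 ≤ ε) (hε1 : ε ≤ (d : ℝ) - (r : ℝ)) :
    μ {ω | Υ ω ≤ ε} ≤
      ENNReal.ofReal ((d : ℝ) * (ε / ((d : ℝ) - (r : ℝ))) ^ (1 / ((d : ℝ) - 1))) :=
  statement14_general d r hrd hd μ G hGmeas hGindep hGdist B hB Υ hΥ ε hε0 hε1
end

section
/- Let r < d be positive integers with d ≥ 2, and let Υ be a random variable with values in [0,1] satisfying P(Υ ≤ ε) ≤ d·(ε/(d−r))^{1/(d−1)} for every ε ∈ [0,1]. Set λ = e·d^{2d−2}/(d−r) and κ = exp(1/(λ(d−1))). Then d·κ^λ·E[(1−Υ)^λ] < 1. -/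
/-!
With `p = 1 / (d - 1)` one has `κ ^ λ = e ^ p` and `(λ (d - r)) ^ p = e ^ p d ^ 2`.
Since `Υ > 0` almost surely, `(1 - Υ) ^ λ < exp (-λ Υ)`, so it suffices to show
`E[exp (-λ Υ)] ≤ 1 / (d e ^ p)`. By the layer-cake formula and the small-ball bound,
`E[exp (-λ Υ)] = ∫₀¹ P(Υ < -log t / λ) dt ≤ d (λ (d - r)) ^ (-p) ∫₀¹ (-log t) ^ p dt`,
and by Bernoulli's inequality `∫₀¹ (-log t) ^ p dt ≤ ∫₀¹ (1 - p - p log t) dt = 1`.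
-/

open MeasureTheory Real Set

theorem one_sub_rpow_lt_exp_neg_mul {x a : ℝ} (hx0 : 0 < x) (hx1 : x ≤ 1) (ha : 0 < a) :
    (1 - x) ^ a < exp (-(a * x)) := by
  rcases hx1.eq_or_lt with rfl | hx1
  · rw [sub_self, zero_rpow ha.ne']
    exact exp_pos _
  have hlog : log (1 - x) < -x := by
    linarith [log_lt_sub_one_of_pos (by linarith : 0 < 1 - x) (by linarith : 1 - x ≠ 1)]
  rw [rpow_def_of_pos (by linarith), exp_lt_exp]
  nlinarith

theorem integral_neg_log_Ioc_zero_one : ∫ t in Ioc (0 : ℝ) 1, -log t = 1 := by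
  rw [integral_neg, ← intervalIntegral.integral_of_le zero_le_one, integral_log]
  simp

theorem integrableOn_log_Ioc_zero_one : IntegrableOn log (Ioc (0 : ℝ) 1) :=
  (intervalIntegrable_iff_integrableOn_Ioc_of_le zero_le_one).1
    intervalIntegral.intervalIntegrable_log'

theorem lintegral_neg_log_rpow_le_one {p : ℝ} (hp0 : 0 ≤ p) (hp1 : p ≤ 1) :
    ∫⁻ t in Ioc (0 : ℝ) 1, ENNReal.ofReal ((-log t) ^ p) ≤ 1 := by
  have hbernoulli : ∀ t ∈ Ioc (0 : ℝ) 1, (-log t) ^ p ≤ (1 - p) + p * -log t := fun t ht => by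
    have hL : 0 ≤ -log t := neg_nonneg.2 (log_nonpos ht.1.le ht.2)
    have := rpow_one_add_le_one_add_mul_self (s := -log t - 1) (by linarith) hp0 hp1
    rw [add_sub_cancel] at this
    linarith
  have hconst : IntegrableOn (fun _ => 1 - p) (Ioc (0 : ℝ) 1) := integrableOn_const (by simp)
  have hlog : IntegrableOn (fun t => p * -log t) (Ioc (0 : ℝ) 1) :=
    integrableOn_log_Ioc_zero_one.neg.const_mul p
  have hval : ∫ t in Ioc (0 : ℝ) 1, ((1 - p) + p * -log t) = 1 := by
    rw [integral_add hconst hlog, integral_const_mul, integral_neg_log_Ioc_zero_one]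
    simp
  calc ∫⁻ t in Ioc (0 : ℝ) 1, ENNReal.ofReal ((-log t) ^ p)
      ≤ ∫⁻ t in Ioc (0 : ℝ) 1, ENNReal.ofReal ((1 - p) + p * -log t) :=
        setLIntegral_mono' measurableSet_Ioc fun t ht => ENNReal.ofReal_le_ofReal (hbernoulli t ht)
    _ = ENNReal.ofReal (∫ t in Ioc (0 : ℝ) 1, ((1 - p) + p * -log t)) := by
        refine (ofReal_integral_eq_lintegral_ofReal (hconst.add hlog) ?_).symm
        filter_upwards [ae_restrict_mem measurableSet_Ioc] with t ht
        exact (rpow_nonneg (neg_nonneg.2 (log_nonpos ht.1.le ht.2)) p).trans (hbernoulli t ht)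
    _ = 1 := by rw [hval, ENNReal.ofReal_one]

section SmallBall

variable {Ω : Type*} [MeasurableSpace Ω] {μ : Measure Ω} {X : Ω → ℝ} {lam a C p : ℝ}

theorem measure_lt_exp_neg_mul_le (hX : ∀ ω, X ω ≤ 1) (hlam : 0 < lam) (ha : 0 < a) (hC : 0 ≤ C)
    (hp : 0 ≤ p)
    (htail : ∀ ε ∈ Icc (0 : ℝ) 1, μ {ω | X ω ≤ ε} ≤ ENNReal.ofReal (C * (ε / a) ^ p))
    {t : ℝ} (ht : t ∈ Ioc (0 : ℝ) 1) :
    μ {ω | t < exp (-(lam * X ω))} ≤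
      ENNReal.ofReal (C / (lam * a) ^ p) * ENNReal.ofReal ((-log t) ^ p) := by
  have hL : 0 ≤ -log t := neg_nonneg.2 (log_nonpos ht.1.le ht.2)
  set ε := min (-log t / lam) 1
  have hε : ε ∈ Icc (0 : ℝ) 1 := ⟨le_min (div_nonneg hL hlam.le) zero_le_one, min_le_right _ _⟩
  have hsub : {ω | t < exp (-(lam * X ω))} ⊆ {ω | X ω ≤ ε} := fun ω hω => by
    have : log t < -(lam * X ω) := (log_lt_iff_lt_exp ht.1).2 hω
    refine le_min ?_ (hX ω)
    rw [le_div_iff₀ hlam]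
    linarith
  have hpow : C * (ε / a) ^ p ≤ C / (lam * a) ^ p * (-log t) ^ p := by
    calc C * (ε / a) ^ p ≤ C * (-log t / (lam * a)) ^ p := by
          rw [← div_div]
          gcongr
          exact min_le_left _ _
      _ = C / (lam * a) ^ p * (-log t) ^ p := by
          rw [div_rpow hL (by positivity)]
          ring
  calc μ {ω | t < exp (-(lam * X ω))} ≤ μ {ω | X ω ≤ ε} := measure_mono hsub
    _ ≤ ENNReal.ofReal (C * (ε / a) ^ p) := htail ε hε
    _ ≤ _ := by
        rw [← ENNReal.ofReal_mul (by positivity)]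
        exact ENNReal.ofReal_le_ofReal hpow

theorem lintegral_exp_neg_mul_le (hX : ∀ ω, X ω ∈ Icc (0 : ℝ) 1) (hXm : Measurable X)
    (hlam : 0 < lam) (ha : 0 < a) (hC : 0 ≤ C) (hp0 : 0 ≤ p) (hp1 : p ≤ 1)
    (htail : ∀ ε ∈ Icc (0 : ℝ) 1, μ {ω | X ω ≤ ε} ≤ ENNReal.ofReal (C * (ε / a) ^ p)) :
    ∫⁻ ω, ENNReal.ofReal (exp (-(lam * X ω))) ∂μ ≤ ENNReal.ofReal (C / (lam * a) ^ p) := by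
  set K := ENNReal.ofReal (C / (lam * a) ^ p)
  have hbound : ∀ t ∈ Ioi (0 : ℝ), μ {ω | t < exp (-(lam * X ω))} ≤
      (Ioc (0 : ℝ) 1).indicator (fun t => K * ENNReal.ofReal ((-log t) ^ p)) t := by
    intro t ht
    by_cases ht1 : t ≤ 1
    · rw [indicator_of_mem (show t ∈ Ioc (0 : ℝ) 1 from ⟨ht, ht1⟩)]
      exact measure_lt_exp_neg_mul_le (fun ω => (hX ω).2) hlam ha hC hp0 htail ⟨ht, ht1⟩
    · have hempty : {ω | t < exp (-(lam * X ω))} = ∅ :=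
        eq_empty_of_forall_notMem fun ω hω =>
          ht1 (hω.out.le.trans (exp_le_one_iff.2 (by nlinarith [(hX ω).1])))
      simp [hempty]
  rw [lintegral_eq_lintegral_meas_lt μ (ae_of_all _ fun _ => (exp_pos _).le) (by fun_prop)]
  calc ∫⁻ t in Ioi 0, μ {ω | t < exp (-(lam * X ω))}
      ≤ ∫⁻ t in Ioi 0, (Ioc (0 : ℝ) 1).indicator
          (fun t => K * ENNReal.ofReal ((-log t) ^ p)) t := setLIntegral_mono' measurableSet_Ioi hbound
    _ = K * ∫⁻ t in Ioc (0 : ℝ) 1, ENNReal.ofReal ((-log t) ^ p) := by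
        rw [lintegral_indicator measurableSet_Ioc, Measure.restrict_restrict measurableSet_Ioc,
          inter_eq_left.2 Ioc_subset_Ioi_self, lintegral_const_mul _ (by fun_prop)]
    _ ≤ K := mul_le_of_le_one_right' (lintegral_neg_log_rpow_le_one hp0 hp1)

theorem integral_exp_neg_mul_le (hX : ∀ ω, X ω ∈ Icc (0 : ℝ) 1) (hXm : Measurable X)
    (hlam : 0 < lam) (ha : 0 < a) (hC : 0 ≤ C) (hp0 : 0 ≤ p) (hp1 : p ≤ 1)
    (htail : ∀ ε ∈ Icc (0 : ℝ) 1, μ {ω | X ω ≤ ε} ≤ ENNReal.ofReal (C * (ε / a) ^ p)) :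
    ∫ ω, exp (-(lam * X ω)) ∂μ ≤ C / (lam * a) ^ p := by
  rw [integral_eq_lintegral_of_nonneg_ae (ae_of_all _ fun _ => (exp_pos _).le) (by fun_prop)]
  exact ENNReal.toReal_le_of_le_ofReal (by positivity)
    (lintegral_exp_neg_mul_le hX hXm hlam ha hC hp0 hp1 htail)

end SmallBall

theorem integral_lt_integral_of_ae_lt {α : Type*} [MeasurableSpace α] {μ : Measure α} [NeZero μ]
    {f g : α → ℝ} (hf : Integrable f μ) (hg : Integrable g μ) (hfg : ∀ᵐ x ∂μ, f x < g x) :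
    ∫ x, f x ∂μ < ∫ x, g x ∂μ := by
  rw [← sub_pos, ← integral_sub hg hf,
    integral_pos_iff_support_of_nonneg_ae (hfg.mono fun x hx => (sub_pos.2 hx).le) (hg.sub hf)]
  calc 0 < μ univ := Measure.measure_univ_pos.2 (NeZero.ne μ)
    _ ≤ μ (Function.support (g - f)) :=
        measure_mono_ae (hfg.mono fun x hx _ => sub_ne_zero.2 hx.ne')

theorem integral_one_sub_rpow_lt_integral_exp_neg_mul {Ω : Type*} [MeasurableSpace Ω]
    {μ : Measure Ω} [IsFiniteMeasure μ] [NeZero μ] {X : Ω → ℝ} {a : ℝ}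
    (hX : ∀ ω, X ω ∈ Icc (0 : ℝ) 1) (hXm : Measurable X) (hpos : ∀ᵐ ω ∂μ, 0 < X ω) (ha : 0 < a) :
    ∫ ω, (1 - X ω) ^ a ∂μ < ∫ ω, exp (-(a * X ω)) ∂μ := by
  refine integral_lt_integral_of_ae_lt ?_ ?_
    (hpos.mono fun ω h => one_sub_rpow_lt_exp_neg_mul h (hX ω).2 ha)
  · refine Integrable.of_bound ((measurable_const.sub hXm).pow_const a).aestronglyMeasurable
      1 (ae_of_all _ fun ω => ?_)
    have h1 : 0 ≤ 1 - X ω := sub_nonneg.2 (hX ω).2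
    rw [norm_of_nonneg (rpow_nonneg h1 _)]
    exact rpow_le_one h1 (by linarith [(hX ω).1]) ha.le
  · refine Integrable.of_bound (by fun_prop) 1 (ae_of_all _ fun ω => ?_)
    rw [norm_of_nonneg (exp_pos _).le, exp_le_one_iff]
    nlinarith [(hX ω).1]

theorem exp_one_mul_pow_two_mul_rpow_inv {x : ℝ} (hx : 0 ≤ x) {n : ℕ} (hn : n ≠ 0) :
    (exp 1 * x ^ (2 * n)) ^ (1 / (n : ℝ)) = exp (1 / n) * x ^ 2 := by
  rw [mul_rpow (exp_pos 1).le (by positivity), exp_one_rpow, pow_mul, ← rpow_natCast (x ^ 2),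
    ← rpow_mul (by positivity), mul_one_div_cancel (by exact_mod_cast hn), rpow_one]

theorem statement15_general (d r : ℕ) (hrd : r < d) (hd : 2 ≤ d)
    {Ω : Type*} [MeasurableSpace Ω] (μ : Measure Ω) [IsProbabilityMeasure μ]
    (Υ : Ω → ℝ) (hmeas : Measurable Υ)
    (hval : ∀ ω, Υ ω ∈ Set.Icc (0 : ℝ) 1)
    (htail : ∀ ε ∈ Set.Icc (0 : ℝ) 1,
        μ {ω | Υ ω ≤ ε} ≤
          ENNReal.ofReal ((d : ℝ) * (ε / ((d : ℝ) - (r : ℝ))) ^ (1 / ((d : ℝ) - 1))))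
    (lam κ : ℝ)
    (hlam : lam = Real.exp 1 * (d : ℝ) ^ (2 * d - 2) / ((d : ℝ) - (r : ℝ)))
    (hκ : κ = Real.exp (1 / (lam * ((d : ℝ) - 1)))) :
    (d : ℝ) * κ ^ lam * ∫ ω, (1 - Υ ω) ^ lam ∂μ < 1 := by
  have hd1 : ((d - 1 : ℕ) : ℝ) = d - 1 := by rw [Nat.cast_sub (by omega), Nat.cast_one]
  have hd2 : (2 : ℝ) ≤ d := by exact_mod_cast hd
  have hdr : 0 < (d : ℝ) - r := sub_pos.2 (by exact_mod_cast hrd)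
  set p := 1 / ((d : ℝ) - 1) with hp
  have hp0 : 0 < p := one_div_pos.2 (by linarith)
  have hlam0 : 0 < lam := hlam ▸ by positivity
  have hκlam : κ ^ lam = exp p := by
    rw [hκ, ← exp_mul, hp]
    field_simp
  have hlamdr : (lam * (d - r)) ^ p = exp p * d ^ 2 := by
    rw [hlam, div_mul_cancel₀ _ hdr.ne', show 2 * d - 2 = 2 * (d - 1) by omega, hp, ← hd1,
      exp_one_mul_pow_two_mul_rpow_inv (Nat.cast_nonneg d) (by omega)]
  have hpos : ∀ᵐ ω ∂μ, 0 < Υ ω := by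
    have h0 : μ {ω | Υ ω ≤ 0} = 0 := by
      simpa [zero_rpow hp0.ne'] using htail 0 ⟨le_rfl, zero_le_one⟩
    exact measure_eq_zero_iff_ae_notMem.1 h0 |>.mono fun ω h => not_le.1 h
  have hmoment := integral_one_sub_rpow_lt_integral_exp_neg_mul hval hmeas hpos hlam0
  have hexp := integral_exp_neg_mul_le hval hmeas hlam0 hdr (Nat.cast_nonneg d)
    (by positivity) (div_le_one_of_le₀ (by linarith) (by linarith)) htail
  calc (d : ℝ) * κ ^ lam * ∫ ω, (1 - Υ ω) ^ lam ∂μ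
      < d * exp p * ∫ ω, exp (-(lam * Υ ω)) ∂μ := by
        rw [hκlam]
        exact mul_lt_mul_of_pos_left hmoment (mul_pos (by linarith) (exp_pos p))
    _ ≤ d * exp p * (d / (lam * (d - r)) ^ p) := by gcongr
    _ = 1 := by
        rw [hlamdr]
        field_simp

theorem statement15 (d r : ℕ) (hr : 0 < r) (hrd : r < d) (hd : 2 ≤ d)
    {Ω : Type*} [MeasurableSpace Ω] (μ : Measure Ω) [IsProbabilityMeasure μ]
    (Υ : Ω → ℝ) (hmeas : Measurable Υ)
    (hval : ∀ ω, Υ ω ∈ Set.Icc (0 : ℝ) 1)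
    (htail : ∀ ε ∈ Set.Icc (0 : ℝ) 1,
        μ {ω | Υ ω ≤ ε} ≤
          ENNReal.ofReal ((d : ℝ) * (ε / ((d : ℝ) - (r : ℝ))) ^ (1 / ((d : ℝ) - 1))))
    (lam κ : ℝ)
    (hlam : lam = Real.exp 1 * (d : ℝ) ^ (2 * d - 2) / ((d : ℝ) - (r : ℝ)))
    (hκ : κ = Real.exp (1 / (lam * ((d : ℝ) - 1)))) :
    (d : ℝ) * κ ^ lam * ∫ ω, (1 - Υ ω) ^ lam ∂μ < 1 :=
  statement15_general d r hrd hd μ Υ hmeas hval htail lam κ hlam hκ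
end
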